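/- arXiv:1111.0689 — 6 statements merged into one kernel-verified Lean document; each statement's English description precedes it below -/
import Mathlib

section
/- Sliding-window subset entropy inequality (Theorem 3): Let L ≥ 2 and let X_1,…,X_L be jointly distributed random variables each taking values in a finite set. Then for every α ∈ {2,…,L}, (1/(α−1)) · ∑_{l=1}^{L} H(X_{W_l^{(α−1)}}) ≥ (1/α) · ∑_{l=1}^{L} H(X_{W_l^{(α)}}). -/
open MeasureTheory ProbabilityTheory

noncomputable def entH {Ω : Type*} [MeasurableSpace Ω] (μ : Measure Ω)
    {S : Type*} [Fintype S] (X : Ω → S) : ℝ :=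
  ∑ s : S, Real.negMulLog ((μ (X ⁻¹' {s})).toReal)

noncomputable def condEntH {Ω : Type*} [MeasurableSpace Ω] (μ : Measure Ω)
    {S T : Type*} [Fintype S] [Fintype T] (X : Ω → S) (Y : Ω → T) : ℝ :=
  entH μ (fun ω => (X ω, Y ω)) - entH μ Y

def jointOn {Ω : Type*} {ι : Type*} {S : ι → Type*} (X : ∀ i, Ω → S i) (U : Finset ι) :
    Ω → ((i : U) → S i) := fun ω i => X i ω

noncomputable def entHset {Ω : Type*} [MeasurableSpace Ω] (μ : Measure Ω)
    {ι : Type*} [DecidableEq ι] {S : ι → Type*} [∀ i, Fintype (S i)]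
    (X : ∀ i, Ω → S i) (U : Finset ι) : ℝ :=
  entH μ (jointOn X U)

noncomputable def condEntHset {Ω : Type*} [MeasurableSpace Ω] (μ : Measure Ω)
    {ι : Type*} [DecidableEq ι] {S : ι → Type*} [∀ i, Fintype (S i)]
    (X : ∀ i, Ω → S i) (U A : Finset ι) : ℝ :=
  condEntH μ (jointOn X U) (jointOn X A)

/-- The sliding window `W_l^{(α)}` (0-indexed: `{⟨l+k⟩ : k < α}` with indices mod `L`). -/
def win (L : ℕ) (l : Fin L) (α : ℕ) : Finset (Fin L) :=
  (Finset.range α).image (fun k => (⟨((l : ℕ) + k) % L, Nat.mod_lt _ l.pos⟩ : Fin L))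

/-!
Entropy is submodular, `H(U ∪ V ∪ W) + H(V) ≤ H(U ∪ V) + H(V ∪ W)`: this is Gibbs' inequality
comparing the joint law with the product of the conditional laws given the middle variable.
Put `s n = ∑ₗ H(W_l^{(n)})`. The window of length `n + 1` at `l` is `l` adjoined to the window
of length `n` at `l + 1`, so reindexing by the rotation `l ↦ l + 1` gives
`s (n + 1) - s n = ∑ₗ H(X_l | X_{W_{l+1}^{(n)}})`, which is antitone in `n` by submodularity.
A sequence with `s 0 ≥ 0` and antitone increments has `s n / n` antitone, and the theorem is
the comparison of `n = α - 1` with `n = α`.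
-/

open Real

lemma mul_log_div_le_sub {q u : ℝ} (hq : 0 < q) (hu : 0 < u) : q * log (u / q) ≤ u - q := by
  have := log_le_sub_one_of_pos (div_pos hu hq)
  calc q * log (u / q) ≤ q * (u / q - 1) := by gcongr
    _ = u - q := by field_simp

theorem sum_negMulLog_add_negMulLog_sum_le {A C : Type*} [Fintype A] [Fintype C]
    (r : A → C → ℝ) (hr : ∀ a c, 0 ≤ r a c) :
    ∑ a, ∑ c, negMulLog (r a c) + negMulLog (∑ a, ∑ c, r a c) ≤
      ∑ a, negMulLog (∑ c, r a c) + ∑ c, negMulLog (∑ a, r a c) := by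
  set rA : A → ℝ := fun a => ∑ c, r a c
  set rC : C → ℝ := fun c => ∑ a, r a c
  set T := ∑ a, rA a
  have hrA : ∀ a, 0 ≤ rA a := fun a => Finset.sum_nonneg fun c _ => hr a c
  have hT0 : 0 ≤ T := Finset.sum_nonneg fun a _ => hrA a
  -- Gibbs' inequality against the product `rA a * rC c / T` of the marginals
  have gibbs : ∀ a c, r a c * (log (rA a) + log (rC c) - log T - log (r a c)) ≤
      rA a * rC c / T - r a c := by
    intro a c
    have hrC : 0 ≤ rC c := Finset.sum_nonneg fun a _ => hr a c
    obtain h | h := (hr a c).eq_or_lt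
    · rw [← h, zero_mul, sub_zero]
      exact div_nonneg (mul_nonneg (hrA a) hrC) hT0
    have hA : 0 < rA a := h.trans_le (Finset.single_le_sum (fun c _ => hr a c) (Finset.mem_univ c))
    have hC : 0 < rC c := h.trans_le (Finset.single_le_sum (fun a _ => hr a c) (Finset.mem_univ a))
    have hT : 0 < T := hA.trans_le (Finset.single_le_sum (fun a _ => hrA a) (Finset.mem_univ a))
    calc r a c * (log (rA a) + log (rC c) - log T - log (r a c))
        = r a c * log (rA a * rC c / T / r a c) := by
          rw [log_div (by positivity) h.ne', log_div (by positivity) hT.ne', log_mul hA.ne' hC.ne']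
      _ ≤ _ := mul_log_div_le_sub h (by positivity)
  have hsum := Finset.sum_le_sum fun a (_ : a ∈ Finset.univ) =>
    Finset.sum_le_sum fun c (_ : c ∈ Finset.univ) => gibbs a c
  have hprod : ∑ a, ∑ c, (rA a * rC c / T - r a c) = 0 := by
    simp only [Finset.sum_sub_distrib, ← Finset.sum_div, ← Finset.mul_sum, ← Finset.sum_mul]
    rw [show ∑ c, rC c = T from Finset.sum_comm, mul_self_div_self, sub_self]
  have expand : ∑ a, ∑ c, r a c * (log (rA a) + log (rC c) - log T - log (r a c)) =
      ∑ a, rA a * log (rA a) + ∑ c, rC c * log (rC c) - T * log T -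
        ∑ a, ∑ c, r a c * log (r a c) := by
    simp only [mul_add, mul_sub, Finset.sum_add_distrib, Finset.sum_sub_distrib, ← Finset.sum_mul]
    rw [Finset.sum_comm (f := fun a c => r a c * log (rC c))]
    simp only [← Finset.sum_mul]
    rfl
  simp only [negMulLog, neg_mul, Finset.sum_neg_distrib]
  linarith

section Entropy

variable {Ω : Type*} [MeasurableSpace Ω] (μ : Measure Ω)
  {A B C : Type*} [Fintype A] [Fintype B] [Fintype C]

lemma entH_comp_of_injective (X : Ω → A) {φ : A → B} (hφ : Function.Injective φ) :
    entH μ (fun ω => φ (X ω)) = entH μ X := by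
  refine (Fintype.sum_of_injective φ hφ (fun a => negMulLog (μ.real (X ⁻¹' {a}))) _
    (fun b hb => ?_) (fun a => ?_)).symm
  · have : (fun ω => φ (X ω)) ⁻¹' {b} = ∅ :=
      Set.eq_empty_of_forall_notMem fun ω hω => hb ⟨X ω, hω⟩
    simp [this]
  · simp only [Set.preimage, Set.mem_singleton_iff, hφ.eq_iff]
    rfl

lemma entH_nonneg [IsProbabilityMeasure μ] (X : Ω → A) : 0 ≤ entH μ X :=
  Finset.sum_nonneg fun _ _ => negMulLog_nonneg ENNReal.toReal_nonneg measureReal_le_one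

lemma entH_prod_eq_sum (X : Ω → A) (Y : Ω → B) :
    entH μ (fun ω => (X ω, Y ω)) = ∑ a, ∑ b, negMulLog (μ.real (X ⁻¹' {a} ∩ Y ⁻¹' {b})) := by
  rw [entH, Fintype.sum_prod_type]
  simp only [← Set.singleton_prod_singleton, Set.mk_preimage_prod]
  rfl

variable [IsFiniteMeasure μ] [MeasurableSpace A] [MeasurableSingletonClass A]
  [MeasurableSpace C] [MeasurableSingletonClass C]

lemma sum_measureReal_inter_preimage_singleton {X : Ω → A} (hX : Measurable X) (s : Set Ω) :
    ∑ a, μ.real (s ∩ X ⁻¹' {a}) = μ.real s := by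
  have := sum_measureReal_preimage_singleton (μ := μ.restrict s) Finset.univ
    (fun a _ => hX (measurableSet_singleton a))
  simpa [measureReal_restrict_apply (hX (measurableSet_singleton _)), Set.inter_comm,
    measureReal_restrict_apply_univ] using this

theorem entH_prod_prod_add_le {X : Ω → A} (Y : Ω → B) {Z : Ω → C}
    (hX : Measurable X) (hZ : Measurable Z) :
    entH μ (fun ω => ((X ω, Y ω), Z ω)) + entH μ Y ≤
      entH μ (fun ω => (X ω, Y ω)) + entH μ (fun ω => (Y ω, Z ω)) := by
  set q : A → B → C → ℝ := fun a b c => μ.real (X ⁻¹' {a} ∩ Y ⁻¹' {b} ∩ Z ⁻¹' {c})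
  have hXYZ : entH μ (fun ω => ((X ω, Y ω), Z ω)) = ∑ b, ∑ a, ∑ c, negMulLog (q a b c) := by
    rw [entH_prod_eq_sum, Fintype.sum_prod_type, Finset.sum_comm]
    simp only [← Set.singleton_prod_singleton, Set.mk_preimage_prod]
    rfl
  have hXY : entH μ (fun ω => (X ω, Y ω)) = ∑ b, ∑ a, negMulLog (∑ c, q a b c) := by
    simp only [q, sum_measureReal_inter_preimage_singleton μ hZ]
    rw [entH_prod_eq_sum, Finset.sum_comm]
  have hYZ : entH μ (fun ω => (Y ω, Z ω)) = ∑ b, ∑ c, negMulLog (∑ a, q a b c) := by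
    have hq : ∀ a b c, q a b c = μ.real (Y ⁻¹' {b} ∩ Z ⁻¹' {c} ∩ X ⁻¹' {a}) :=
      fun _ _ _ => by simp only [q]; rw [Set.inter_assoc, Set.inter_comm]
    simp only [hq, sum_measureReal_inter_preimage_singleton μ hX]
    rw [entH_prod_eq_sum]
  have hY : entH μ Y = ∑ b, negMulLog (∑ a, ∑ c, q a b c) := by
    simp only [q, sum_measureReal_inter_preimage_singleton μ hZ, Set.inter_comm (X ⁻¹' _),
      sum_measureReal_inter_preimage_singleton μ hX]
    rfl
  rw [hXYZ, hXY, hYZ, hY, ← Finset.sum_add_distrib, ← Finset.sum_add_distrib]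
  exact Finset.sum_le_sum fun b _ =>
    sum_negMulLog_add_negMulLog_sum_le (fun a c => q a b c) fun a c => measureReal_nonneg

end Entropy

lemma Finset.injective_restrict₂_union_prod {ι : Type*} [DecidableEq ι] {T : ι → Type*}
    (U V : Finset ι) :
    Function.Injective fun y : (i : (U ∪ V : Finset ι)) → T i =>
      (restrict₂ subset_union_left y, restrict₂ subset_union_right y) := by
  intro y z hyz
  funext ⟨i, hi⟩
  obtain hU | hV := mem_union.1 hi
  · exact congrFun (congrArg Prod.fst hyz) ⟨i, hU⟩
  · exact congrFun (congrArg Prod.snd hyz) ⟨i, hV⟩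

lemma measurable_jointOn {Ω ι : Type*} [MeasurableSpace Ω] {S : ι → Type*}
    [∀ i, MeasurableSpace (S i)] {X : ∀ i, Ω → S i} (hX : ∀ i, Measurable (X i)) (U : Finset ι) :
    Measurable (jointOn X U) :=
  measurable_pi_lambda _ fun i => hX i

section SetEntropy

variable {Ω : Type*} [MeasurableSpace Ω] (μ : Measure Ω)
  {ι : Type*} [DecidableEq ι] {S : ι → Type*} [∀ i, Fintype (S i)]

lemma entH_prod_jointOn (X : ∀ i, Ω → S i) (U V : Finset ι) :
    entH μ (fun ω => (jointOn X U ω, jointOn X V ω)) = entHset μ X (U ∪ V) := by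
  rw [entHset, ← entH_comp_of_injective μ _ (Finset.injective_restrict₂_union_prod U V)]
  rfl

variable [IsFiniteMeasure μ] [∀ i, MeasurableSpace (S i)] [∀ i, MeasurableSingletonClass (S i)]
  {X : ∀ i, Ω → S i}

theorem entHset_union_union_add_le (hX : ∀ i, Measurable (X i)) (U V W : Finset ι) :
    entHset μ X (U ∪ V ∪ W) + entHset μ X V ≤ entHset μ X (U ∪ V) + entHset μ X (V ∪ W) := by
  have h := entH_prod_prod_add_le μ (jointOn X V) (measurable_jointOn hX U)
    (measurable_jointOn hX W)
  have hUVW : entH μ (fun ω => ((jointOn X U ω, jointOn X V ω), jointOn X W ω)) =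
      entHset μ X (U ∪ V ∪ W) := by
    rw [← entH_prod_jointOn, ← entH_comp_of_injective μ _
      ((Finset.injective_restrict₂_union_prod U V).prodMap Function.injective_id)]
    rfl
  rwa [entH_prod_jointOn, entH_prod_jointOn, hUVW] at h

theorem entHset_insert_sub_le_of_subset (hX : ∀ i, Measurable (X i)) (c : ι) {U V : Finset ι}
    (hUV : U ⊆ V) :
    entHset μ X (insert c V) - entHset μ X V ≤ entHset μ X (insert c U) - entHset μ X U := by
  have h := entHset_union_union_add_le μ hX {c} U V
  rw [Finset.union_assoc, Finset.union_eq_right.2 hUV, ← Finset.insert_eq,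
    ← Finset.insert_eq] at h
  linarith

end SetEntropy

lemma val_finRotate {L : ℕ} (l : Fin L) : (finRotate L l : ℕ) = (l + 1) % L := by
  have := l.neZero
  rw [finRotate_apply, Fin.val_add, Fin.val_one', Nat.add_mod_mod]

lemma win_succ {L : ℕ} (l : Fin L) (j : ℕ) :
    win L l (j + 1) = insert l (win L (finRotate L l) j) := by
  rw [win, Finset.range_add_one', Finset.image_insert, Finset.map_eq_image, Finset.image_image,
    win]
  congr 1
  · ext
    simp [Nat.mod_eq_of_lt l.isLt]
  · congr 1
    funext k
    ext
    change (l + (k + 1)) % L = ((finRotate L l : ℕ) + k) % L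
    rw [val_finRotate, Nat.mod_add_mod, Nat.add_right_comm, Nat.add_assoc]

lemma win_mono {L : ℕ} (l : Fin L) {j k : ℕ} (hjk : j ≤ k) : win L l j ⊆ win L l k :=
  Finset.image_subset_image (Finset.range_subset_range.2 hjk)

lemma natCast_mul_succ_le_of_antitone_sub {s : ℕ → ℝ} (h0 : 0 ≤ s 0)
    (hs : Antitone fun j => s (j + 1) - s j) (n : ℕ) : n * s (n + 1) ≤ (n + 1) * s n := by
  have increment_le : ∀ n : ℕ, n * (s (n + 1) - s n) ≤ s n - s 0 := by
    intro n
    induction n with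
    | zero => simp
    | succ n ih =>
      have := hs n.le_succ
      push_cast
      nlinarith
  nlinarith [increment_le n]

section SlidingWindow

variable {Ω : Type*} [MeasurableSpace Ω] (μ : Measure Ω) {L : ℕ} {S : Fin L → Type*}
  [∀ l, Fintype (S l)] {X : ∀ l, Ω → S l}

lemma sum_entHset_win_succ_sub_sum (j : ℕ) :
    ∑ l, entHset μ X (win L l (j + 1)) - ∑ l, entHset μ X (win L l j) =
      ∑ l, (entHset μ X (insert l (win L (finRotate L l) j)) -
        entHset μ X (win L (finRotate L l) j)) := by
  simp only [win_succ, Finset.sum_sub_distrib,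
    Equiv.sum_comp (finRotate L) fun l => entHset μ X (win L l j)]

theorem antitone_sum_entHset_win_succ_sub_sum [IsFiniteMeasure μ] [∀ l, MeasurableSpace (S l)]
    [∀ l, MeasurableSingletonClass (S l)] (hX : ∀ l, Measurable (X l)) :
    Antitone fun j => ∑ l, entHset μ X (win L l (j + 1)) - ∑ l, entHset μ X (win L l j) := by
  refine antitone_nat_of_succ_le fun j => ?_
  rw [sum_entHset_win_succ_sub_sum, sum_entHset_win_succ_sub_sum]
  exact Finset.sum_le_sum fun l _ =>
    entHset_insert_sub_le_of_subset μ hX l (win_mono _ j.le_succ)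

end SlidingWindow

theorem sliding_window_subset_entropy_inequality_general
    {Ω : Type*} [MeasurableSpace Ω] (μ : Measure Ω) [IsProbabilityMeasure μ]
    {L : ℕ} {S : Fin L → Type*} [∀ l, Fintype (S l)]
    [∀ l, MeasurableSpace (S l)] [∀ l, MeasurableSingletonClass (S l)]
    (X : ∀ l, Ω → S l) (hX : ∀ l, Measurable (X l))
    (α : ℕ) (hα1 : 2 ≤ α) :
    (1 / ((α : ℝ) - 1)) * ∑ l : Fin L, entHset μ X (win L l (α - 1)) ≥
      (1 / (α : ℝ)) * ∑ l : Fin L, entHset μ X (win L l α) := by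
  obtain ⟨β, rfl⟩ : ∃ β, α = β + 1 := ⟨α - 1, by omega⟩
  have hβ : (0 : ℝ) < β := by exact_mod_cast (by omega : 0 < β)
  have h := natCast_mul_succ_le_of_antitone_sub (s := fun n => ∑ l, entHset μ X (win L l n))
    (Finset.sum_nonneg fun l _ => entH_nonneg μ _) (antitone_sum_entHset_win_succ_sub_sum μ hX) β
  simp only [Nat.add_sub_cancel, Nat.cast_add, Nat.cast_one, add_sub_cancel_right]
  rw [ge_iff_le, one_div_mul_eq_div, one_div_mul_eq_div, div_le_div_iff₀ (by positivity) hβ]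
  linarith

/-- **Sliding-window subset entropy inequality** (Theorem 3). -/
theorem sliding_window_subset_entropy_inequality
    {Ω : Type*} [MeasurableSpace Ω] (μ : Measure Ω) [IsProbabilityMeasure μ]
    {L : ℕ} (hL : 2 ≤ L) {S : Fin L → Type*} [∀ l, Fintype (S l)]
    [∀ l, MeasurableSpace (S l)] [∀ l, MeasurableSingletonClass (S l)]
    (X : ∀ l, Ω → S l) (hX : ∀ l, Measurable (X l))
    (α : ℕ) (hα1 : 2 ≤ α) (hα2 : α ≤ L) :
    (1 / ((α : ℝ) - 1)) * ∑ l : Fin L, entHset μ X (win L l (α - 1)) ≥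
      (1 / (α : ℝ)) * ∑ l : Fin L, entHset μ X (win L l α) :=
  sliding_window_subset_entropy_inequality_general μ X hX α hα1
end

section
/- Chain form of the Madiman–Tetali inequality (Corollary 1): Let Σ be a finite ground set, let M be a positive integer, and let Σ^{(1)},…,Σ^{(M)} be mutually exclusive collections of subsets of Σ. For U ∈ Σ^{(α)} (2 ≤ α ≤ M), let 𝒱_U := {V ∈ Σ^{(α−1)} : V ⊆ U}, and for V ∈ Σ^{(α−1)}, let 𝒰_V := {U ∈ Σ^{(α)} : U ⊇ V}. Let c : ∪_{α=1}^{M} Σ^{(α)} → ℝ≥0 and fix α ∈ {2,…,M}. If there exists a collection of functions {g_U : U ∈ Σ^{(α)}} such that each g_U is a fractional cover of the hypergraph (U, 𝒱_U) and c(V) = ∑_{U ∈ 𝒰_V} g_U(V) c(U) for every V ∈ Σ^{(α−1)}, then ∑_{V ∈ Σ^{(α−1)}} c(V) H(X_V) ≥ ∑_{U ∈ Σ^{(α)}} c(U) H(X_U) for any jointly distributed random variables X_Σ = (X_i : i ∈ Σ) each taking values in a finite set. -/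
/-!
The entropy set function `A ↦ H(X_A)` is a polymatroid: it vanishes at `∅`, is monotone
because a function of a random variable has no more entropy than the variable itself, and is
submodular because conditional mutual information is nonnegative (Gibbs' inequality against the
product of the conditional marginals). For any polymatroid `f` and any fractional cover `g` of
`U`, Shearer's bound `f U ≤ ∑ g V * f V` follows by deleting the points of `U` one at a time: by
submodularity the increment of `f` at a point is paid for by the sets containing it, whose
weights add up to at least one. Multiply the bound for `U` by `c U ≥ 0`, sum over `U` and
exchange the two sums; the balance condition on `c` turns the right-hand side into `∑ c V * f V`.
-/

open MeasureTheory ProbabilityTheory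

open Real Finset

section Polymatroid

variable {ι κ : Type*} [DecidableEq ι]

structure IsPolymatroid (f : Finset ι → ℝ) : Prop where
  map_empty : f ∅ = 0
  mono : Monotone f
  submodular : ∀ A B, f (A ∪ B) + f (A ∩ B) ≤ f A + f B

namespace IsPolymatroid

variable {f : Finset ι → ℝ}

lemma nonneg (hf : IsPolymatroid f) (A : Finset ι) : 0 ≤ f A :=
  hf.map_empty ▸ hf.mono (empty_subset A)

lemma add_inter_erase_le (hf : IsPolymatroid f) {U V : Finset ι} {i : ι} (hi : i ∈ V) :
    f U + f (V ∩ U.erase i) ≤ f V + f (U.erase i) := by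
  have hU : U ⊆ V ∪ U.erase i := fun j hj => by
    by_cases hji : j = i
    · exact mem_union_left _ (hji ▸ hi)
    · exact mem_union_right _ (mem_erase.mpr ⟨hji, hj⟩)
  linarith [hf.mono hU, hf.submodular V (U.erase i)]

theorem le_sum_of_fractional_cover (hf : IsPolymatroid f) (s : Finset κ) (V : κ → Finset ι)
    (g : κ → ℝ) (hg : ∀ k ∈ s, 0 ≤ g k) (U : Finset ι)
    (hcov : ∀ i ∈ U, 1 ≤ ∑ k ∈ s with i ∈ V k, g k) :
    f U ≤ ∑ k ∈ s, g k * f (V k) := by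
  induction U using Finset.strongInduction generalizing V with
  | _ U IH =>
  rcases U.eq_empty_or_nonempty with rfl | ⟨i, hi⟩
  · rw [hf.map_empty]
    exact sum_nonneg fun k hk => mul_nonneg (hg k hk) (hf.nonneg _)
  -- Cover `U.erase i` by the traces `V k ∩ U.erase i`; the sets containing `i` pay for the
  -- increment `f U - f (U.erase i)`, which they cover with total weight at least one.
  have hrest : f (U.erase i) ≤ ∑ k ∈ s, g k * f (V k ∩ U.erase i) :=
    IH _ (erase_ssubset hi) _ fun j hj => by
      simpa [mem_inter, hj] using hcov j (mem_of_mem_erase hj)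
  have hgain : 0 ≤ f U - f (U.erase i) := sub_nonneg.mpr (hf.mono (erase_subset i U))
  have hterm : ∀ k ∈ s, g k * f (V k ∩ U.erase i) + (if i ∈ V k then g k else 0) *
      (f U - f (U.erase i)) ≤ g k * f (V k) := by
    intro k hk
    split_ifs with hik
    · nlinarith [hf.add_inter_erase_le (U := U) hik, hg k hk]
    · nlinarith [hf.mono (inter_subset_left : V k ∩ U.erase i ⊆ V k), hg k hk]
  have hcov_i : f U - f (U.erase i) ≤
      (∑ k ∈ s, if i ∈ V k then g k else 0) * (f U - f (U.erase i)) := by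
    rw [← sum_filter]
    nlinarith [hcov i hi]
  calc f U ≤ ∑ k ∈ s, g k * f (V k ∩ U.erase i) +
        (∑ k ∈ s, if i ∈ V k then g k else 0) * (f U - f (U.erase i)) := by linarith
    _ ≤ ∑ k ∈ s, g k * f (V k) := by
      rw [sum_mul, ← sum_add_distrib]
      exact sum_le_sum hterm

theorem sum_mul_le_sum_mul (hf : IsPolymatroid f) (𝒰 𝒱 : Finset (Finset ι))
    (c : Finset ι → ℝ) (g : Finset ι → Finset ι → ℝ) (hc0 : ∀ U ∈ 𝒰, 0 ≤ c U)
    (hg0 : ∀ U ∈ 𝒰, ∀ V ∈ 𝒱.filter (· ⊆ U), 0 ≤ g U V)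
    (hcov : ∀ U ∈ 𝒰, ∀ i ∈ U,
      1 ≤ ∑ V ∈ 𝒱.filter (fun V => V ⊆ U ∧ i ∈ V), g U V)
    (hc : ∀ V ∈ 𝒱, c V = ∑ U ∈ 𝒰.filter (V ⊆ ·), g U V * c U) :
    ∑ U ∈ 𝒰, c U * f U ≤ ∑ V ∈ 𝒱, c V * f V := by
  have hshearer : ∀ U ∈ 𝒰, f U ≤ ∑ V ∈ 𝒱.filter (· ⊆ U), g U V * f V :=
    fun U hU => hf.le_sum_of_fractional_cover _ id (g U) (hg0 U hU) U fun i hi => by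
      simpa only [filter_filter, id] using hcov U hU i hi
  calc ∑ U ∈ 𝒰, c U * f U
      ≤ ∑ U ∈ 𝒰, ∑ V ∈ 𝒱.filter (· ⊆ U), c U * (g U V * f V) :=
        sum_le_sum fun U hU => by
          rw [← mul_sum]; exact mul_le_mul_of_nonneg_left (hshearer U hU) (hc0 U hU)
    _ = ∑ V ∈ 𝒱, ∑ U ∈ 𝒰.filter (V ⊆ ·), c U * (g U V * f V) := by
        simp_rw [sum_filter]; exact sum_comm
    _ = ∑ V ∈ 𝒱, c V * f V := sum_congr rfl fun V hV => by
        rw [hc V hV, sum_mul]; exact sum_congr rfl fun U _ => by ring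

end IsPolymatroid

end Polymatroid

lemma negMulLog_sum_le {β : Type*} (s : Finset β) (m : β → ℝ) (hm : ∀ b ∈ s, 0 ≤ m b) :
    negMulLog (∑ b ∈ s, m b) ≤ ∑ b ∈ s, negMulLog (m b) := by
  rw [negMulLog_eq_neg]
  simp only [sum_mul, ← sum_neg_distrib]
  refine sum_le_sum fun b hb => neg_le_neg ?_
  rcases (hm b hb).eq_or_lt with h0 | h0
  · simp [← h0]
  · exact mul_le_mul_of_nonneg_left (log_le_log h0 (single_le_sum hm hb)) (hm b hb)

lemma negMulLog_le_neg_mul_log_add_sub {q r : ℝ} (hq : 0 ≤ q) (hr : 0 ≤ r)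
    (hqr : 0 < q → 0 < r) : negMulLog q ≤ -(q * log r) + (r - q) := by
  rcases hq.eq_or_lt with rfl | hq
  · simpa using hr
  have hr := hqr hq
  have := mul_le_mul_of_nonneg_left (log_le_sub_one_of_pos (div_pos hr hq)) hq.le
  rw [log_div hr.ne' hq.ne', mul_sub, mul_sub, mul_one, mul_div_cancel₀ _ hq.ne'] at this
  rw [negMulLog]
  linarith

-- The mutual information of an unnormalised weight matrix is nonnegative.
lemma sum_sum_negMulLog_add_negMulLog_sum_le {A C : Type*} [Fintype A] [Fintype C]
    (q : A → C → ℝ) (hq : ∀ a c, 0 ≤ q a c) :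
    ∑ a, ∑ c, negMulLog (q a c) + negMulLog (∑ a, ∑ c, q a c) ≤
      ∑ a, negMulLog (∑ c, q a c) + ∑ c, negMulLog (∑ a, q a c) := by
  set R : A → ℝ := fun a => ∑ c, q a c with hRdef
  set K : C → ℝ := fun c => ∑ a, q a c with hKdef
  set Q : ℝ := ∑ a, ∑ c, q a c with hQdef
  have hR : ∀ a c, q a c ≤ R a := fun a c => single_le_sum (fun c _ => hq a c) (mem_univ c)
  have hK : ∀ a c, q a c ≤ K c := fun a c => single_le_sum (fun a _ => hq a c) (mem_univ a)
  have hQ : ∀ a, R a ≤ Q := fun a =>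
    single_le_sum (f := R) (fun a _ => sum_nonneg fun c _ => hq a c) (mem_univ a)
  -- Gibbs' inequality against the product of the marginals, `R a * K c / Q`.
  have hgibbs : ∀ a c, negMulLog (q a c) ≤
      -(q a c * log (R a)) - q a c * log (K c) + q a c * log Q + (R a * K c / Q - q a c) := by
    intro a c
    have hRa : 0 ≤ R a := (hq a c).trans (hR a c)
    have hKc : 0 ≤ K c := (hq a c).trans (hK a c)
    have h := negMulLog_le_neg_mul_log_add_sub (hq a c) (r := R a * K c / Q)
      (div_nonneg (mul_nonneg hRa hKc) (hRa.trans (hQ a))) fun h =>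
        div_pos (mul_pos (h.trans_le (hR a c)) (h.trans_le (hK a c)))
          ((h.trans_le (hR a c)).trans_le (hQ a))
    rcases (hq a c).eq_or_lt with h0 | h0
    · rw [← h0] at h ⊢; simpa using h
    have hRa' : 0 < R a := h0.trans_le (hR a c)
    rw [log_div (mul_pos hRa' (h0.trans_le (hK a c))).ne' (hRa'.trans_le (hQ a)).ne',
      log_mul hRa'.ne' (h0.trans_le (hK a c)).ne'] at h
    linarith
  have hRsum : ∑ a, ∑ c, -(q a c * log (R a)) = ∑ a, negMulLog (R a) := by
    simp only [hRdef, negMulLog_eq_neg, sum_mul, sum_neg_distrib]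
  have hKsum : ∑ a, ∑ c, q a c * log (K c) = -∑ c, negMulLog (K c) := by
    rw [sum_comm]
    simp only [hKdef, negMulLog_eq_neg, sum_mul, sum_neg_distrib, neg_neg]
  have hQsum : ∑ a, ∑ c, q a c * log Q = -negMulLog Q := by
    simp only [hQdef, negMulLog_eq_neg, sum_mul, neg_neg]
  have hprod : ∑ a, ∑ c, R a * K c / Q = Q := by
    simp_rw [mul_div_assoc, ← mul_sum, ← sum_mul, ← sum_div]
    have hKQ : ∑ c, K c = Q := sum_comm
    have hRQ : ∑ a, R a = Q := rfl
    rw [hKQ, hRQ]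
    by_cases hQ0 : Q = 0
    · simp [hQ0]
    · field_simp
  have := sum_le_sum fun a (_ : a ∈ univ) => sum_le_sum fun c (_ : c ∈ univ) => hgibbs a c
  simp only [sum_add_distrib, sum_sub_distrib] at this
  linarith

section PushEntropy

open scoped Classical

variable {T A B C : Type*} [Fintype T] (p : T → ℝ)

noncomputable def pushMass (f : T → A) (a : A) : ℝ := ∑ t with f t = a, p t

noncomputable def pushEntropy [Fintype A] (f : T → A) : ℝ := ∑ a, negMulLog (pushMass p f a)

variable {p}

lemma pushMass_nonneg (hp : ∀ t, 0 ≤ p t) (f : T → A) (a : A) : 0 ≤ pushMass p f a :=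
  sum_nonneg fun t _ => hp t

lemma pushMass_comp [Fintype A] (φ : A → B) (f : T → A) :
    pushMass p (φ ∘ f) = pushMass (pushMass p f) φ := by
  ext b
  simp only [pushMass]
  rw [sum_fiberwise_eq_sum_filter univ {a | φ a = b} f p]
  congr 1
  ext t
  simp

lemma pushEntropy_comp [Fintype A] [Fintype B] (φ : A → B) (f : T → A) :
    pushEntropy p (φ ∘ f) = pushEntropy (pushMass p f) φ := by
  rw [pushEntropy, pushEntropy, pushMass_comp]

lemma pushEntropy_id : pushEntropy p id = ∑ t, negMulLog (p t) := by
  simp [pushEntropy, pushMass, sum_filter]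

lemma pushEntropy_comp_le [Fintype A] [Fintype B] (hp : ∀ t, 0 ≤ p t) (φ : A → B)
    (f : T → A) :
    pushEntropy p (φ ∘ f) ≤ pushEntropy p f := by
  rw [pushEntropy_comp, pushEntropy, pushEntropy]
  calc ∑ b, negMulLog (pushMass (pushMass p f) φ b)
      ≤ ∑ b, ∑ a with φ a = b, negMulLog (pushMass p f a) :=
        sum_le_sum fun b _ => negMulLog_sum_le _ _ fun a _ => pushMass_nonneg hp f a
    _ = ∑ a, negMulLog (pushMass p f a) := sum_fiberwise _ _ _

lemma pushEntropy_le_of_factorsThrough [Fintype A] [Fintype B] (hp : ∀ t, 0 ≤ p t)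
    {f : T → A} {g : T → B} (hgf : g.FactorsThrough f) :
    pushEntropy p g ≤ pushEntropy p f := by
  rcases isEmpty_or_nonempty T with hT | hT
  · simp [pushEntropy, pushMass]
  · rw [← hgf.extend_comp fun _ => g hT.some]
    exact pushEntropy_comp_le hp _ f

lemma pushEntropy_id_add_le [Fintype A] [Fintype B] [Fintype C]
    {m : A × B × C → ℝ} (hm : ∀ z, 0 ≤ m z) :
    pushEntropy m id + pushEntropy m (·.2.1) ≤
      pushEntropy m (fun z => (z.1, z.2.1)) + pushEntropy m (·.2) := by
  have hid : pushEntropy m id = ∑ a, ∑ b, ∑ c, negMulLog (m (a, b, c)) := by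
    simp only [pushEntropy_id, Fintype.sum_prod_type]
  have hB : pushEntropy m (·.2.1) = ∑ b, negMulLog (∑ a, ∑ c, m (a, b, c)) := by
    refine sum_congr rfl fun b _ => congrArg negMulLog ?_
    simp only [pushMass, sum_filter, Fintype.sum_prod_type]
    exact sum_congr rfl fun a _ => by rw [sum_comm]; simp
  have hAB : pushEntropy m (fun z => (z.1, z.2.1)) =
      ∑ a, ∑ b, negMulLog (∑ c, m (a, b, c)) := by
    rw [pushEntropy, Fintype.sum_prod_type]
    refine sum_congr rfl fun a _ => sum_congr rfl fun b _ => congrArg negMulLog ?_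
    simp only [pushMass, sum_filter, Fintype.sum_prod_type, Prod.mk.injEq, ite_and]
    rw [sum_comm]
    simp only [sum_ite_irrel, sum_const_zero, sum_ite_eq', mem_univ, if_true]
    rw [sum_comm]
    simp
  have hBC : pushEntropy m (·.2) = ∑ b, ∑ c, negMulLog (∑ a, m (a, b, c)) := by
    rw [pushEntropy, Fintype.sum_prod_type]
    refine sum_congr rfl fun b _ => sum_congr rfl fun c _ => congrArg negMulLog ?_
    simp [pushMass, sum_filter, Fintype.sum_prod_type]
  have key := sum_le_sum fun b (_ : b ∈ univ) =>
    sum_sum_negMulLog_add_negMulLog_sum_le (fun a c => m (a, b, c)) fun a c => hm _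
  simp only [sum_add_distrib] at key
  rw [hid, hB, hAB, hBC, sum_comm (s := univ (α := A)),
    sum_comm (s := univ (α := A)) (t := univ (α := B))]
  exact key

lemma pushEntropy_triple_add_le [Fintype A] [Fintype B] [Fintype C] (hp : ∀ t, 0 ≤ p t)
    (F : T → A) (G : T → B) (H : T → C) :
    pushEntropy p (fun t => (F t, G t, H t)) + pushEntropy p G ≤
      pushEntropy p (fun t => (F t, G t)) + pushEntropy p (fun t => (G t, H t)) := by
  have h := pushEntropy_id_add_le (pushMass_nonneg hp fun t => (F t, G t, H t))
  simp only [← pushEntropy_comp] at h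
  exact h

lemma entH_comp_eq_pushEntropy {Ω : Type*} [MeasurableSpace Ω] (μ : Measure Ω)
    [IsFiniteMeasure μ] {W : Ω → T} (hW : ∀ t, MeasurableSet (W ⁻¹' {t})) [Fintype A]
    (φ : T → A) :
    entH μ (φ ∘ W) = pushEntropy (fun t => (μ (W ⁻¹' {t})).toReal) φ := by
  refine sum_congr rfl fun a _ => congrArg negMulLog ?_
  have hfiber : (φ ∘ W) ⁻¹' {a} = ⋃ t ∈ ({t | φ t = a} : Finset T), W ⁻¹' {t} := by
    ext ω; simp
  rw [pushMass, hfiber, measure_biUnion_finset (fun t _ t' _ htt' =>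
      Set.disjoint_left.mpr fun ω h h' => htt' (h.symm.trans h')) fun t _ => hW t,
    ENNReal.toReal_sum fun t _ => measure_ne_top μ _]

end PushEntropy

section EntropySetFunction

variable {Ω : Type*} [MeasurableSpace Ω] (μ : Measure Ω) [IsProbabilityMeasure μ]
  {ι : Type*} [DecidableEq ι] {S : ι → Type*} [∀ i, Fintype (S i)]
  [∀ i, MeasurableSpace (S i)] [∀ i, MeasurableSingletonClass (S i)] {X : ∀ i, Ω → S i}

lemma entHset_eq_pushEntropy_restrict₂ (hX : ∀ i, Measurable (X i)) {A B : Finset ι}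
    (hAB : A ⊆ B) :
    entHset μ X A =
      pushEntropy (fun x => (μ (jointOn X B ⁻¹' {x})).toReal)
        (restrict₂ hAB : ((i : B) → S i) → (i : A) → S i) := by
  show entH μ (restrict₂ hAB ∘ jointOn X B) = _
  exact entH_comp_eq_pushEntropy μ (W := jointOn X B)
    (fun x => measurable_pi_lambda (jointOn X B) (fun i => hX i) (measurableSet_singleton x))
    _

theorem isPolymatroid_entHset (hX : ∀ i, Measurable (X i)) : IsPolymatroid (entHset μ X) where
  map_empty := by
    have : jointOn X ∅ ⁻¹' {default} = Set.univ :=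
      Set.eq_univ_of_forall fun _ => Subsingleton.elim _ _
    simp [entHset, entH, this]
  mono A B hAB := by
    rw [entHset_eq_pushEntropy_restrict₂ μ hX hAB,
      entHset_eq_pushEntropy_restrict₂ μ hX subset_rfl]
    exact pushEntropy_le_of_factorsThrough (fun _ => ENNReal.toReal_nonneg) fun x y h => by
      ext i; exact congrFun h ⟨i, hAB i.2⟩
  submodular A B := by
    rw [entHset_eq_pushEntropy_restrict₂ μ hX (subset_refl (A ∪ B)),
      entHset_eq_pushEntropy_restrict₂ μ hX (inter_subset_left.trans subset_union_left),
      entHset_eq_pushEntropy_restrict₂ μ hX subset_union_left,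
      entHset_eq_pushEntropy_restrict₂ μ hX subset_union_right]
    set p := fun x => (μ (jointOn X (A ∪ B) ⁻¹' {x})).toReal
    have hp : ∀ x, 0 ≤ p x := fun _ => ENNReal.toReal_nonneg
    set ρA := (restrict₂ subset_union_left : ((i : ↥(A ∪ B)) → S i) → (i : A) → S i)
    set ρI := (restrict₂ (inter_subset_left.trans subset_union_left) :
      ((i : ↥(A ∪ B)) → S i) → (i : ↥(A ∩ B)) → S i)
    set ρB := (restrict₂ subset_union_right : ((i : ↥(A ∪ B)) → S i) → (i : B) → S i)
    have hU : pushEntropy p (restrict₂ (subset_refl _) : ((i : ↥(A ∪ B)) → S i) → _) ≤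
        pushEntropy p (fun x => (ρA x, ρI x, ρB x)) :=
      pushEntropy_le_of_factorsThrough hp fun x y h => by
        simp only [Prod.mk.injEq] at h
        ext ⟨i, hi⟩
        rcases mem_union.mp hi with hiA | hiB
        · exact congrFun h.1 ⟨i, hiA⟩
        · exact congrFun h.2.2 ⟨i, hiB⟩
    have hA : pushEntropy p (fun x => (ρA x, ρI x)) ≤ pushEntropy p ρA :=
      pushEntropy_le_of_factorsThrough hp fun x y h => by
        simp only [Prod.mk.injEq]
        exact ⟨h, funext fun i => congrFun h ⟨i, (mem_inter.mp i.2).1⟩⟩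
    have hB : pushEntropy p (fun x => (ρI x, ρB x)) ≤ pushEntropy p ρB :=
      pushEntropy_le_of_factorsThrough hp fun x y h => by
        simp only [Prod.mk.injEq]
        exact ⟨funext fun i => congrFun h ⟨i, (mem_inter.mp i.2).2⟩, h⟩
    linarith [pushEntropy_triple_add_le hp ρA ρI ρB]

end EntropySetFunction

theorem madiman_tetali_chain_general
    {Ω : Type*} [MeasurableSpace Ω] (μ : Measure Ω) [IsProbabilityMeasure μ]
    {ι : Type*} [DecidableEq ι]
    {S : ι → Type*} [∀ i, Fintype (S i)] [∀ i, MeasurableSpace (S i)]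
    [∀ i, MeasurableSingletonClass (S i)]
    (X : ∀ i, Ω → S i) (hX : ∀ i, Measurable (X i))
    (M : ℕ) (Sig : ℕ → Finset (Finset ι))
    (c : Finset ι → ℝ)
    (hc0 : ∀ β ∈ Finset.Icc 1 M, ∀ U ∈ Sig β, 0 ≤ c U)
    (α : ℕ) (hα1 : 2 ≤ α) (hα2 : α ≤ M)
    (g : Finset ι → Finset ι → ℝ)
    (hg0 : ∀ U ∈ Sig α, ∀ V ∈ (Sig (α - 1)).filter (fun V => V ⊆ U), 0 ≤ g U V)
    (hgcov : ∀ U ∈ Sig α, ∀ i ∈ U,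
      1 ≤ ∑ V ∈ (Sig (α - 1)).filter (fun V => V ⊆ U ∧ i ∈ V), g U V)
    (hc : ∀ V ∈ Sig (α - 1), c V = ∑ U ∈ (Sig α).filter (fun U => V ⊆ U), g U V * c U) :
    ∑ V ∈ Sig (α - 1), c V * entHset μ X V ≥ ∑ U ∈ Sig α, c U * entHset μ X U := by
  have hα : α ∈ Finset.Icc 1 M := Finset.mem_Icc.mpr ⟨by omega, hα2⟩
  exact (isPolymatroid_entHset μ hX).sum_mul_le_sum_mul (Sig α) (Sig (α - 1)) c g (hc0 α hα)
    hg0 hgcov hc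

/-- **Chain form of the Madiman–Tetali inequality** (Corollary 1). -/
theorem madiman_tetali_chain
    {Ω : Type*} [MeasurableSpace Ω] (μ : Measure Ω) [IsProbabilityMeasure μ]
    {ι : Type*} [Fintype ι] [DecidableEq ι]
    {S : ι → Type*} [∀ i, Fintype (S i)] [∀ i, MeasurableSpace (S i)]
    [∀ i, MeasurableSingletonClass (S i)]
    (X : ∀ i, Ω → S i) (hX : ∀ i, Measurable (X i))
    (M : ℕ) (hM : 1 ≤ M) (Sig : ℕ → Finset (Finset ι))
    (hdisj : ∀ a ∈ Finset.Icc 1 M, ∀ b ∈ Finset.Icc 1 M, a ≠ b → Disjoint (Sig a) (Sig b))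
    (c : Finset ι → ℝ)
    (hc0 : ∀ β ∈ Finset.Icc 1 M, ∀ U ∈ Sig β, 0 ≤ c U)
    (α : ℕ) (hα1 : 2 ≤ α) (hα2 : α ≤ M)
    (g : Finset ι → Finset ι → ℝ)
    (hg0 : ∀ U ∈ Sig α, ∀ V ∈ (Sig (α - 1)).filter (fun V => V ⊆ U), 0 ≤ g U V)
    (hgcov : ∀ U ∈ Sig α, ∀ i ∈ U,
      1 ≤ ∑ V ∈ (Sig (α - 1)).filter (fun V => V ⊆ U ∧ i ∈ V), g U V)
    (hc : ∀ V ∈ Sig (α - 1), c V = ∑ U ∈ (Sig α).filter (fun U => V ⊆ U), g U V * c U) :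
    ∑ V ∈ Sig (α - 1), c V * entHset μ X V ≥ ∑ U ∈ Sig α, c U * entHset μ X U :=
  madiman_tetali_chain_general μ X hX M Sig c hc0 α hα1 hα2 g hg0 hgcov hc
end

section
/- Conditional chain form of the Madiman–Tetali inequality (Proposition 1): Let Σ be a finite ground set, M a positive integer, and Σ^{(1)},…,Σ^{(M)} mutually exclusive collections of subsets of Σ; for U ∈ Σ^{(α)} let 𝒱_U := {V ∈ Σ^{(α−1)} : V ⊆ U} and for V ∈ Σ^{(α−1)} let 𝒰_V := {U ∈ Σ^{(α)} : U ⊇ V}. For each U ∈ Σ^{(M)} let 𝒜_U be a collection of subsets of Σ, and for α = M−1 down to 1 define 𝒜_V := ∪_{U ∈ 𝒰_V} 𝒜_U for V ∈ Σ^{(α)}. For each U ∈ ∪_{α=1}^{M} Σ^{(α)} let s(U,·) : 𝒜_U → ℝ≥0. Fix α ∈ {2,…,M}. If there exists a collection of functions {g_U : U ∈ Σ^{(α)}} such that each g_U is a fractional cover of (U, 𝒱_U) and s(V,A) = ∑_{U ∈ 𝒰_V : 𝒜_U ∋ A} g_U(V) s(U,A) for every V ∈ Σ^{(α−1)} and A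 ∈ 𝒜_V, then ∑_{V ∈ Σ^{(α−1)}} ∑_{A ∈ 𝒜_V} s(V,A) H(X_V | X_A) ≥ ∑_{U ∈ Σ^{(α)}} ∑_{A ∈ 𝒜_U} s(U,A) H(X_U | X_A) for any jointly distributed random variables X_Σ = (X_i : i ∈ Σ) each taking values in a finite set. -/
open MeasureTheory ProbabilityTheory

open Finset Real Function

/-!
Write `h(B) = H(X_B)`. Submodularity of Shannon entropy, `H(Z,X,Y) + H(Z) ≤ H(Z,X) + H(Z,Y)`,
is the Gibbs inequality applied to the joint law of `(X,Y)` given `Z` against the product of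
the conditional marginals; it makes `h` monotone and submodular. For such `h`, a fractional cover
`g` of `U` by subsets `V` gives `h(U ∪ A) - h(A) ≤ ∑ g(V) (h(V ∪ A) - h(A))`: remove the elements
of `U` one at a time and use diminishing returns in each `V` that contains the removed element.
Weighting by `s(U,A) ≥ 0` and summing over `U` and `A ∈ 𝒜_U`, the sums can be exchanged because
`𝒜_U ⊆ 𝒜_V` whenever `V ⊆ U`, and the defining relation of `s(V,·)` collapses the result.
-/

def IsSubmodular {ι : Type*} [DecidableEq ι] (f : Finset ι → ℝ) : Prop :=
  ∀ P Q, f (P ∪ Q) + f (P ∩ Q) ≤ f P + f Q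

namespace IsSubmodular

variable {ι : Type*} [DecidableEq ι] {f : Finset ι → ℝ}

theorem sub_le_sub_of_subset (hf : IsSubmodular f) {B C : Finset ι} (hBC : B ⊆ C) {i : ι}
    (hi : i ∉ C) :
    f (insert i C) - f C ≤ f (insert i B) - f B := by
  have h := hf (insert i B) C
  rw [insert_union, union_eq_right.2 hBC, insert_inter_of_notMem hi, inter_eq_left.2 hBC] at h
  linarith

theorem union_right (hf : IsSubmodular f) (A : Finset ι) :
    IsSubmodular fun B => f (B ∪ A) - f A := by
  intro P Q
  have h := hf (P ∪ A) (Q ∪ A)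
  rw [← union_union_distrib_right, ← inter_union_distrib_right] at h
  linarith

theorem le_sum_of_fractional_cover (hf : IsSubmodular f) (hmono : Monotone f) (h0 : f ∅ = 0)
    {κ : Type*} (K : Finset κ) (g : κ → ℝ) (hg : ∀ k ∈ K, 0 ≤ g k) (U : Finset ι)
    (V : κ → Finset ι) (hV : ∀ k ∈ K, V k ⊆ U) (hcov : ∀ i ∈ U, 1 ≤ ∑ k ∈ K with i ∈ V k, g k) :
    f U ≤ ∑ k ∈ K, g k * f (V k) := by
  induction U using Finset.induction_on generalizing V with
  | empty =>
    rw [h0]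
    exact sum_nonneg fun k hk => mul_nonneg (hg k hk) (h0 ▸ hmono (empty_subset _))
  | insert m U hm ih =>
    set Δ := f (insert m U) - f U
    have hΔ : 0 ≤ Δ := sub_nonneg.2 (hmono (subset_insert m U))
    have hrest : f U ≤ ∑ k ∈ K, g k * f ((V k).erase m) := by
      refine ih _ (fun k hk => subset_insert_iff.1 (hV k hk)) fun i hi => ?_
      simpa [mem_erase, ne_of_mem_of_not_mem hi hm] using hcov i (mem_insert_of_mem hi)
    have hgain : ∀ k ∈ K, (if m ∈ V k then g k else 0) * Δ ≤
        g k * (f (V k) - f ((V k).erase m)) := by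
      intro k hk
      split_ifs with hmV
      · refine mul_le_mul_of_nonneg_left ?_ (hg k hk)
        have h := hf.sub_le_sub_of_subset (subset_insert_iff.1 (hV k hk)) hm
        rwa [insert_erase hmV] at h
      · simp [erase_eq_of_notMem hmV]
    calc f (insert m U) = f U + 1 * Δ := by ring
      _ ≤ ∑ k ∈ K, g k * f ((V k).erase m) + (∑ k ∈ K with m ∈ V k, g k) * Δ := by
        gcongr
        exact hcov m (mem_insert_self m U)
      _ ≤ ∑ k ∈ K, g k * f ((V k).erase m) + ∑ k ∈ K, g k * (f (V k) - f ((V k).erase m)) := by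
        rw [sum_filter, sum_mul]
        exact (add_le_add_iff_left _).2 (sum_le_sum hgain)
      _ = ∑ k ∈ K, g k * f (V k) := by
        rw [← sum_add_distrib]
        exact sum_congr rfl fun k _ => by ring

theorem sub_le_sum_of_fractional_cover (hf : IsSubmodular f) (hmono : Monotone f)
    {κ : Type*} (K : Finset κ) (g : κ → ℝ) (hg : ∀ k ∈ K, 0 ≤ g k) (U A : Finset ι)
    (V : κ → Finset ι) (hV : ∀ k ∈ K, V k ⊆ U) (hcov : ∀ i ∈ U, 1 ≤ ∑ k ∈ K with i ∈ V k, g k) :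
    f (U ∪ A) - f A ≤ ∑ k ∈ K, g k * (f (V k ∪ A) - f A) :=
  (hf.union_right A).le_sum_of_fractional_cover
    (fun _ _ h => sub_le_sub_right (hmono (union_subset_union_left h)) _) (by simp)
    K g hg U V hV hcov

end IsSubmodular

theorem sum_sum_sum_comm_of_subset {κ τ : Type*} [DecidableEq τ] (𝒰 𝒱 : Finset κ)
    (r : κ → κ → Prop) [DecidableRel r] (𝒜 : κ → Finset τ)
    (h𝒜 : ∀ U ∈ 𝒰, ∀ V ∈ 𝒱, r V U → 𝒜 U ⊆ 𝒜 V) (w : κ → κ → τ → ℝ) :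
    ∑ U ∈ 𝒰, ∑ A ∈ 𝒜 U, ∑ V ∈ 𝒱 with r V U, w U V A =
      ∑ V ∈ 𝒱, ∑ A ∈ 𝒜 V, ∑ U ∈ 𝒰 with r V U ∧ A ∈ 𝒜 U, w U V A := by
  have hinner : ∀ U ∈ 𝒰, ∀ V ∈ 𝒱, ∑ A ∈ 𝒜 U, (if r V U then w U V A else 0) =
      ∑ A ∈ 𝒜 V, if r V U ∧ A ∈ 𝒜 U then w U V A else 0 := by
    intro U hU V hV
    by_cases hr : r V U
    · simp only [hr, true_and, if_true]
      rw [← sum_filter, filter_mem_eq_inter, inter_eq_right.2 (h𝒜 U hU V hV hr)]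
    · simp [hr]
  simp only [sum_filter]
  calc ∑ U ∈ 𝒰, ∑ A ∈ 𝒜 U, ∑ V ∈ 𝒱, (if r V U then w U V A else 0)
      = ∑ U ∈ 𝒰, ∑ V ∈ 𝒱, ∑ A ∈ 𝒜 V, if r V U ∧ A ∈ 𝒜 U then w U V A else 0 :=
        sum_congr rfl fun U hU => sum_comm.trans (sum_congr rfl (hinner U hU))
    _ = ∑ V ∈ 𝒱, ∑ A ∈ 𝒜 V, ∑ U ∈ 𝒰, if r V U ∧ A ∈ 𝒜 U then w U V A else 0 :=
        sum_comm.trans (sum_congr rfl fun V _ => sum_comm)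

/-- The pointwise Gibbs inequality `log x ≤ x - 1` at `x = a b / (q c)`. -/
theorem Real.sub_le_mul_log_ratio {q a b c : ℝ} (hq : 0 ≤ q) (hqa : q ≤ a) (hqb : q ≤ b)
    (hac : a ≤ c) : q - a * b / c ≤ q * log q + q * log c - q * log a - q * log b := by
  obtain rfl | hq := hq.eq_or_lt
  · simpa using div_nonneg (mul_nonneg hqa hqb) (hqa.trans hac)
  have ha : 0 < a := hq.trans_le hqa
  have hb : 0 < b := hq.trans_le hqb
  have hc : 0 < c := ha.trans_le hac
  have h := mul_le_mul_of_nonneg_left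
    (log_le_sub_one_of_pos (show 0 < a * b / (q * c) by positivity)) hq.le
  rw [log_div (by positivity) (by positivity), log_mul ha.ne' hb.ne', log_mul hq.ne' hc.ne',
    mul_sub_one, mul_div_assoc', mul_div_mul_left _ _ hq.ne'] at h
  linarith

/-- Subadditivity of entropy for an unnormalised joint mass `q` with marginals `a`, `b` and total
mass `c`: summed over `x, y`, the left-hand sides `q - a b / c` of the Gibbs bound cancel. -/
theorem Real.sum_negMulLog_add_negMulLog_le {α β : Type*} [Fintype α] [Fintype β]
    (q : α → β → ℝ) (a : α → ℝ) (b : β → ℝ) (c : ℝ) (hq : ∀ x y, 0 ≤ q x y)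
    (ha : ∀ x, ∑ y, q x y = a x) (hb : ∀ y, ∑ x, q x y = b y) (hc : ∑ x, a x = c) :
    ∑ x, ∑ y, negMulLog (q x y) + negMulLog c ≤ ∑ x, negMulLog (a x) + ∑ y, negMulLog (b y) := by
  have hcb : ∑ y, b y = c := by simp only [← hb, ← ha, ← hc]; exact sum_comm
  have hqa : ∀ x y, q x y ≤ a x := fun x y => ha x ▸ single_le_sum (fun y _ => hq x y) (mem_univ y)
  have hqb : ∀ x y, q x y ≤ b y := fun x y => hb y ▸ single_le_sum (fun x _ => hq x y) (mem_univ x)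
  have hac : ∀ x, a x ≤ c := fun x =>
    hc ▸ single_le_sum (fun x _ => ha x ▸ sum_nonneg fun y _ => hq x y) (mem_univ x)
  have hgibbs : ∑ x, ∑ y, (q x y - a x * b y / c) = 0 := by
    simp only [sum_sub_distrib, ← sum_div, ← mul_sum, ← sum_mul, ha, hc, hcb, mul_self_div_self,
      sub_self]
  have hlogc : ∑ x, ∑ y, q x y * log c = c * log c := by simp only [← sum_mul, ha, hc]
  have hloga : ∑ x, ∑ y, q x y * log (a x) = ∑ x, a x * log (a x) := by simp only [← sum_mul, ha]
  have hlogb : ∑ x, ∑ y, q x y * log (b y) = ∑ y, b y * log (b y) := by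
    rw [sum_comm]; simp only [← sum_mul, hb]
  have h := sum_le_sum fun x (_ : x ∈ univ) => sum_le_sum fun y (_ : y ∈ univ) =>
    sub_le_mul_log_ratio (hq x y) (hqa x y) (hqb x y) (hac x)
  simp only [sum_sub_distrib, sum_add_distrib, hlogc, hloga, hlogb] at h hgibbs
  simp only [negMulLog, neg_mul, sum_neg_distrib]
  linarith

section Entropy

variable {Ω : Type*} [MeasurableSpace Ω] {μ : Measure Ω}

theorem entH_comp_of_injective_s6 {A B : Type*} [Fintype A] [Fintype B] {f : A → B}
    (hf : Injective f) (W : Ω → A) : entH μ (fun ω => f (W ω)) = entH μ W := by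
  classical
  refine (Fintype.sum_of_injective f hf _ _ (fun b hb => ?_) fun a => ?_).symm
  · have : (fun ω => f (W ω)) ⁻¹' {b} = ∅ :=
      Set.eq_empty_of_forall_notMem fun ω h => hb ⟨W ω, h⟩
    simp [this]
  · simp only [Set.preimage, Set.mem_singleton_iff, hf.eq_iff]

variable [IsFiniteMeasure μ] {A B C : Type*}
  [MeasurableSpace A] [MeasurableSingletonClass A]
  [MeasurableSpace B] [MeasurableSingletonClass B] [Fintype B]

theorem sum_measureReal_preimage_prodMk {U : Ω → A} {V : Ω → B} (hU : Measurable U)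
    (hV : Measurable V) (u : A) :
    ∑ v, μ.real ((fun ω => (U ω, V ω)) ⁻¹' {(u, v)}) = μ.real (U ⁻¹' {u}) := by
  have h := sum_measureReal_preimage_singleton (μ := μ) (univ.map (Embedding.sectR u B))
    fun _ _ => hU.prodMk hV (measurableSet_singleton _)
  rw [sum_map] at h
  refine h.trans (congrArg μ.real ?_)
  ext ω
  simp [eq_comm]

theorem entH_prodMk_prodMk_add_le [Fintype A] [Fintype C] [MeasurableSpace C]
    [MeasurableSingletonClass C] {Z : Ω → A} {X : Ω → B} {Y : Ω → C} (hZ : Measurable Z)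
    (hX : Measurable X) (hY : Measurable Y) :
    entH μ (fun ω => (Z ω, X ω, Y ω)) + entH μ Z ≤
      entH μ (fun ω => (Z ω, X ω)) + entH μ (fun ω => (Z ω, Y ω)) := by
  simp only [entH, Fintype.sum_prod_type, ← sum_add_distrib]
  refine sum_le_sum fun z _ => Real.sum_negMulLog_add_negMulLog_le
    (fun x y => μ.real ((fun ω => (Z ω, X ω, Y ω)) ⁻¹' {(z, x, y)})) _ _ _
    (fun _ _ => measureReal_nonneg) (fun x => ?_) (fun y => ?_) ?_
  · refine Eq.trans (sum_congr rfl fun y _ => congrArg μ.real (Set.ext fun ω => ?_))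
      (sum_measureReal_preimage_prodMk (hZ.prodMk hX) hY (z, x))
    simp [and_assoc]
  · refine Eq.trans (sum_congr rfl fun x _ => congrArg μ.real (Set.ext fun ω => ?_))
      (sum_measureReal_preimage_prodMk (hZ.prodMk hY) hX (z, y))
    simp only [Set.mem_preimage, Set.mem_singleton_iff, Prod.mk.injEq]
    tauto
  · exact sum_measureReal_preimage_prodMk hZ hX z

end Entropy

section JointEntropy

variable {Ω : Type*} [MeasurableSpace Ω] {μ : Measure Ω} {ι : Type*} [DecidableEq ι]
  {S : ι → Type*}

theorem injective_restrict₂_union (B C : Finset ι) :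
    Injective fun p : (∀ i : ↥(B ∪ C), S i) =>
      (restrict₂ subset_union_left p, restrict₂ subset_union_right p) := by
  intro p p' h
  funext ⟨i, hi⟩
  rcases mem_union.1 hi with hB | hC
  · exact congrFun (congrArg Prod.fst h) ⟨i, hB⟩
  · exact congrFun (congrArg Prod.snd h) ⟨i, hC⟩

variable [∀ i, Fintype (S i)] {X : ∀ i, Ω → S i}

theorem entH_jointOn_prodMk (B C : Finset ι) :
    entH μ (fun ω => (jointOn X B ω, jointOn X C ω)) = entHset μ X (B ∪ C) :=
  entH_comp_of_injective_s6 (injective_restrict₂_union B C) (jointOn X (B ∪ C))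

theorem condEntHset_eq_sub (V A : Finset ι) :
    condEntHset μ X V A = entHset μ X (V ∪ A) - entHset μ X A := by
  rw [condEntHset, condEntH, entH_jointOn_prodMk]
  rfl

variable [IsFiniteMeasure μ] [∀ i, MeasurableSpace (S i)] [∀ i, MeasurableSingletonClass (S i)]

theorem entHset_union_add_le (hX : ∀ i, Measurable (X i)) (B P Q : Finset ι) :
    entHset μ X (B ∪ (P ∪ Q)) + entHset μ X B ≤
      entHset μ X (B ∪ P) + entHset μ X (B ∪ Q) := by
  have hmeas : ∀ C : Finset ι, Measurable (jointOn X C) :=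
    fun C => measurable_pi_lambda _ fun i => hX i
  have htriple : entH μ (fun ω => (jointOn X B ω, jointOn X P ω, jointOn X Q ω)) =
      entH μ (fun ω => (jointOn X B ω, jointOn X (P ∪ Q) ω)) :=
    entH_comp_of_injective_s6 (f := Prod.map id fun p : (∀ i : ↥(P ∪ Q), S i) =>
      (restrict₂ subset_union_left p, restrict₂ subset_union_right p))
      (injective_id.prodMap (injective_restrict₂_union P Q))
      (fun ω => (jointOn X B ω, jointOn X (P ∪ Q) ω))
  have h := entH_prodMk_prodMk_add_le (μ := μ) (hmeas B) (hmeas P) (hmeas Q)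
  rw [htriple, entH_jointOn_prodMk, entH_jointOn_prodMk, entH_jointOn_prodMk] at h
  exact h

theorem isSubmodular_entHset (hX : ∀ i, Measurable (X i)) : IsSubmodular (entHset μ X) := by
  intro P Q
  have h := entHset_union_add_le (μ := μ) hX (P ∩ Q) P Q
  rwa [union_eq_right.2 (inter_subset_left.trans subset_union_left),
    union_eq_right.2 inter_subset_left, union_eq_right.2 inter_subset_right] at h

theorem monotone_entHset (hX : ∀ i, Measurable (X i)) : Monotone (entHset μ X) := by
  intro B C hBC
  -- `H(X_C | X_B) = I(X_C ; X_C | X_B) ≥ 0`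
  have h := entHset_union_add_le (μ := μ) hX B C C
  rw [union_self, union_eq_right.2 hBC] at h
  linarith

end JointEntropy

theorem madiman_tetali_conditional_chain_general
    {Ω : Type*} [MeasurableSpace Ω] (μ : Measure Ω) [IsProbabilityMeasure μ]
    {ι : Type*} [DecidableEq ι]
    {S : ι → Type*} [∀ i, Fintype (S i)] [∀ i, MeasurableSpace (S i)]
    [∀ i, MeasurableSingletonClass (S i)]
    (X : ∀ i, Ω → S i) (hX : ∀ i, Measurable (X i))
    (M : ℕ) (Sig : ℕ → Finset (Finset ι))
    (𝒜 : Finset ι → Finset (Finset ι))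
    (hA : ∀ β ∈ Finset.Icc 1 (M - 1), ∀ V ∈ Sig β,
      𝒜 V = ((Sig (β + 1)).filter (fun U => V ⊆ U)).biUnion 𝒜)
    (s : Finset ι → Finset ι → ℝ)
    (hs0 : ∀ β ∈ Finset.Icc 1 M, ∀ U ∈ Sig β, ∀ A ∈ 𝒜 U, 0 ≤ s U A)
    (α : ℕ) (hα1 : 2 ≤ α) (hα2 : α ≤ M)
    (g : Finset ι → Finset ι → ℝ)
    (hg0 : ∀ U ∈ Sig α, ∀ V ∈ (Sig (α - 1)).filter (fun V => V ⊆ U), 0 ≤ g U V)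
    (hgcov : ∀ U ∈ Sig α, ∀ i ∈ U,
      1 ≤ ∑ V ∈ (Sig (α - 1)).filter (fun V => V ⊆ U ∧ i ∈ V), g U V)
    (hs : ∀ V ∈ Sig (α - 1), ∀ A ∈ 𝒜 V,
      s V A = ∑ U ∈ (Sig α).filter (fun U => V ⊆ U ∧ A ∈ 𝒜 U), g U V * s U A) :
    ∑ V ∈ Sig (α - 1), ∑ A ∈ 𝒜 V, s V A * condEntHset μ X V A ≥
      ∑ U ∈ Sig α, ∑ A ∈ 𝒜 U, s U A * condEntHset μ X U A := by
  have hshearer : ∀ U ∈ Sig α, ∀ A, condEntHset μ X U A ≤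
      ∑ V ∈ Sig (α - 1) with V ⊆ U, g U V * condEntHset μ X V A := by
    intro U hU A
    simp only [condEntHset_eq_sub]
    refine (isSubmodular_entHset hX).sub_le_sum_of_fractional_cover (monotone_entHset hX) _ (g U)
      (hg0 U hU) U A id (fun V hV => (mem_filter.1 hV).2) fun i hi => ?_
    simpa only [filter_filter, id] using hgcov U hU i hi
  have h𝒜 : ∀ U ∈ Sig α, ∀ V ∈ Sig (α - 1), V ⊆ U → 𝒜 U ⊆ 𝒜 V := by
    intro U hU V hV hVU
    rw [hA (α - 1) (mem_Icc.2 ⟨by omega, by omega⟩) V hV, Nat.sub_add_cancel (by omega)]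
    exact subset_biUnion_of_mem 𝒜 (mem_filter.2 ⟨hU, hVU⟩)
  calc ∑ U ∈ Sig α, ∑ A ∈ 𝒜 U, s U A * condEntHset μ X U A
      ≤ ∑ U ∈ Sig α, ∑ A ∈ 𝒜 U, ∑ V ∈ Sig (α - 1) with V ⊆ U,
          g U V * s U A * condEntHset μ X V A := by
        refine sum_le_sum fun U hU => sum_le_sum fun A hAU => ?_
        refine (mul_le_mul_of_nonneg_left (hshearer U hU A)
          (hs0 α (mem_Icc.2 ⟨by omega, hα2⟩) U hU A hAU)).trans_eq ?_
        rw [mul_sum]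
        exact sum_congr rfl fun V _ => by ring
    _ = ∑ V ∈ Sig (α - 1), ∑ A ∈ 𝒜 V, ∑ U ∈ Sig α with V ⊆ U ∧ A ∈ 𝒜 U,
          g U V * s U A * condEntHset μ X V A :=
        sum_sum_sum_comm_of_subset _ _ (fun V U => V ⊆ U) 𝒜 h𝒜
          fun U V A => g U V * s U A * condEntHset μ X V A
    _ = ∑ V ∈ Sig (α - 1), ∑ A ∈ 𝒜 V, s V A * condEntHset μ X V A :=
        sum_congr rfl fun V hV => sum_congr rfl fun A hAV => by rw [hs V hV A hAV, sum_mul]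

/-- **Conditional chain form of the Madiman–Tetali inequality** (Proposition 1).
The families `𝒜_U` are given on the top level `Σ^{(M)}` and propagated downwards by
`𝒜_V = ⋃_{U ∈ 𝒰_V} 𝒜_U` (hypothesis `hA`). -/
theorem madiman_tetali_conditional_chain
    {Ω : Type*} [MeasurableSpace Ω] (μ : Measure Ω) [IsProbabilityMeasure μ]
    {ι : Type*} [Fintype ι] [DecidableEq ι]
    {S : ι → Type*} [∀ i, Fintype (S i)] [∀ i, MeasurableSpace (S i)]
    [∀ i, MeasurableSingletonClass (S i)]
    (X : ∀ i, Ω → S i) (hX : ∀ i, Measurable (X i))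
    (M : ℕ) (hM : 1 ≤ M) (Sig : ℕ → Finset (Finset ι))
    (hdisj : ∀ a ∈ Finset.Icc 1 M, ∀ b ∈ Finset.Icc 1 M, a ≠ b → Disjoint (Sig a) (Sig b))
    (𝒜 : Finset ι → Finset (Finset ι))
    (hA : ∀ β ∈ Finset.Icc 1 (M - 1), ∀ V ∈ Sig β,
      𝒜 V = ((Sig (β + 1)).filter (fun U => V ⊆ U)).biUnion 𝒜)
    (s : Finset ι → Finset ι → ℝ)
    (hs0 : ∀ β ∈ Finset.Icc 1 M, ∀ U ∈ Sig β, ∀ A ∈ 𝒜 U, 0 ≤ s U A)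
    (α : ℕ) (hα1 : 2 ≤ α) (hα2 : α ≤ M)
    (g : Finset ι → Finset ι → ℝ)
    (hg0 : ∀ U ∈ Sig α, ∀ V ∈ (Sig (α - 1)).filter (fun V => V ⊆ U), 0 ≤ g U V)
    (hgcov : ∀ U ∈ Sig α, ∀ i ∈ U,
      1 ≤ ∑ V ∈ (Sig (α - 1)).filter (fun V => V ⊆ U ∧ i ∈ V), g U V)
    (hs : ∀ V ∈ Sig (α - 1), ∀ A ∈ 𝒜 V,
      s V A = ∑ U ∈ (Sig α).filter (fun U => V ⊆ U ∧ A ∈ 𝒜 U), g U V * s U A) :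
    ∑ V ∈ Sig (α - 1), ∑ A ∈ 𝒜 V, s V A * condEntHset μ X V A ≥
      ∑ U ∈ Sig α, ∑ A ∈ 𝒜 U, s U A * condEntHset μ X U A :=
  madiman_tetali_conditional_chain_general μ X hX M Sig 𝒜 hA s hs0 α hα1 hα2 g hg0 hgcov hs
end

section
/- Linear programming result of Yeung and Zhang (Theorem 5): Let L ≥ 2, λ = (λ_1,…,λ_L) with all λ_l ≥ 0, and α ∈ {2,…,L}. Let c_λ^{(α)} : Ω_L^{(α)} → ℝ≥0 be any optimal solution of the linear program defining f_α(λ), and suppose the optimal value f_α(λ) > 0. Then there exists a collection of functions {g_U : U ∈ Ω_L^{(α)}}, where each g_U is a fractional cover of the hypergraph (U, 𝒱_U) with 𝒱_U the collection of all (α−1)-element subsets of U, such that the function c_λ^{(α−1)} : Ω_L^{(α−1)} → ℝ≥0 defined by c_λ(V) := ∑_{U ∈ Ω_L^{(α)}, U ⊇ V} g_U(V) c_λ(U) is an optimal solution of the linear program defining f_{α−1}(λ). -/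
/-- `Ω_L^{(α)}`: the collection of all `α`-element subsets of the index set. -/
def OmegaL (L α : ℕ) : Finset (Finset (Fin L)) :=
  Finset.powersetCard α (Finset.univ : Finset (Fin L))

/-- `f_α(λ)`: the optimal value of the covering linear program. -/
noncomputable def fLP (L : ℕ) (lam : Fin L → ℝ) (α : ℕ) : ℝ :=
  sSup { x : ℝ | ∃ c : Finset (Fin L) → ℝ,
    (∀ U ∈ OmegaL L α, 0 ≤ c U) ∧
    (∀ l : Fin L, ∑ U ∈ (OmegaL L α).filter (fun U => l ∈ U), c U ≤ lam l) ∧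
    x = ∑ U ∈ OmegaL L α, c U }

/-- `c` is an optimal solution of the linear program defining `f_α(λ)`. -/
def IsOptimal (L : ℕ) (lam : Fin L → ℝ) (α : ℕ) (c : Finset (Fin L) → ℝ) : Prop :=
  (∀ U ∈ OmegaL L α, 0 ≤ c U) ∧
  (∀ l : Fin L, ∑ U ∈ (OmegaL L α).filter (fun U => l ∈ U), c U ≤ lam l) ∧
  ∑ U ∈ OmegaL L α, c U = fLP L lam α

/-!
The optimal value `f_β(λ)` is the water level `w_β`, the largest `x` with `β x ≤ ∑ₗ min(λₗ, x)`:
feasibility gives `≤`, and Birkhoff's theorem (the hypersimplex `{x ∈ [0,1]ᴸ | ∑ x = β}` is the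
convex hull of the indicators of `β`-sets) gives `≥`. Hence an optimal `c` of value `s = w_α`
loads every node `l` with exactly `min(λₗ, s)`, and every set it charges contains all nodes with
`λₗ ≥ s`. Let `t = w_{α-1} ≥ s` and `δⱼ = min(λⱼ, t) - min(λⱼ, s)`, and give the
`(α-1)`-subset `U \ {j}` of `U` the weight `(t - s - δⱼ) / s ≥ 0`. The resulting cover value at
`i` is at least `1`, and exactly `1 + δᵢ / s` on a charged `U`, so the pushed-down solution loads
node `l` with exactly `(1 + δₗ / s) min(λₗ, s) = min(λₗ, t)`, which is optimal at level `α - 1`.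
-/

open Finset

section Decomposition

variable {ι : Type*} [DecidableEq ι]

lemma exists_mem_doublyStochastic_sum_rows_eq [Fintype ι] {S : Finset ι} {x : ι → ℝ}
    (hx0 : ∀ i, 0 ≤ x i) (hx1 : ∀ i, x i ≤ 1) (hx : ∑ i, x i = #S) :
    ∃ M ∈ doublyStochastic ℝ ι, ∀ j, ∑ r ∈ S, M r j = x j := by
  have hy : ∑ i, (1 - x i) = #Sᶜ := by
    rw [sum_sub_distrib, hx, card_compl]; simp [Nat.cast_sub (card_le_univ S)]
  have hS : (#S : ℝ) = 0 → ∀ j, x j = 0 := fun h j =>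
    (sum_eq_zero_iff_of_nonneg fun i _ => hx0 i).1 (hx.trans h) j (mem_univ j)
  have hSc : (#Sᶜ : ℝ) = 0 → ∀ j, 1 - x j = 0 := fun h j =>
    (sum_eq_zero_iff_of_nonneg fun i _ => sub_nonneg.2 (hx1 i)).1 (hy.trans h) j (mem_univ j)
  have hrowS : ∀ j, ∑ _r ∈ S, x j / #S = x j := fun j => by
    rw [sum_const, nsmul_eq_mul, mul_div_cancel_of_imp' fun h => hS h j]
  refine ⟨fun r j => if r ∈ S then x j / #S else (1 - x j) / #Sᶜ,
    mem_doublyStochastic_iff_sum.2 ⟨fun r j => ?_, fun r => ?_, fun j => ?_⟩, fun j => ?_⟩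
  · split_ifs
    · exact div_nonneg (hx0 j) (Nat.cast_nonneg _)
    · exact div_nonneg (sub_nonneg.2 (hx1 j)) (Nat.cast_nonneg _)
  · split_ifs with hr
    · rw [← sum_div, hx, div_self (Nat.cast_ne_zero.2 (card_ne_zero_of_mem hr))]
    · rw [← sum_div, hy, div_self (Nat.cast_ne_zero.2 (card_ne_zero_of_mem (mem_compl.2 hr)))]
  · rw [sum_ite, filter_mem_eq_inter, univ_inter, filter_notMem_eq_sdiff, ← compl_eq_univ_sdiff,
      hrowS, sum_const, nsmul_eq_mul, mul_div_cancel_of_imp' fun h => hSc h j]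
    ring
  · rw [sum_congr rfl fun r hr => if_pos hr, hrowS]

/-- Birkhoff's theorem, applied to a doubly stochastic matrix whose rows in a `β`-set `S` sum to
`x`: each permutation `π` of the decomposition contributes the set `π '' S`. -/
lemma exists_weights_powersetCard_of_sum_eq [Fintype ι] {β : ℕ} (hβ : β ≤ Fintype.card ι)
    {x : ι → ℝ} (hx0 : ∀ i, 0 ≤ x i) (hx1 : ∀ i, x i ≤ 1) (hx : ∑ i, x i = β) :
    ∃ w : Finset ι → ℝ, (∀ U, 0 ≤ w U) ∧ ∑ U ∈ powersetCard β univ, w U = 1 ∧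
      ∀ i, ∑ U ∈ (powersetCard β univ).filter (i ∈ ·), w U = x i := by
  obtain ⟨S, -, rfl⟩ := exists_subset_card_eq (s := (univ : Finset ι)) hβ
  obtain ⟨M, hM, hMS⟩ := exists_mem_doublyStochastic_sum_rows_eq hx0 hx1 hx
  obtain ⟨p, hp0, hp1, hpM⟩ := exists_eq_sum_perm_of_mem_doublyStochastic hM
  set image : Equiv.Perm ι → Finset ι := fun π => S.map π.toEmbedding
  have himage : ∀ π, image π ∈ powersetCard #S univ := fun π => by simp [image]
  refine ⟨fun U => ∑ π with image π = U, p π, fun U => sum_nonneg fun π _ => hp0 π,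
    by rw [sum_fiberwise_of_maps_to fun π _ => himage π, hp1], fun i => ?_⟩
  rw [sum_fiberwise_eq_sum_filter, ← hMS i, ← hpM]
  simp [himage, image, Matrix.sum_apply, sum_comm (s := S), Equiv.toPEquiv_apply, sum_filter,
    ← Equiv.eq_symm_apply]

lemma sum_filter_mem_powersetCard_card_sub_one {U : Finset ι} {i : ι} (hi : i ∈ U)
    (f : Finset ι → ℝ) :
    ∑ V ∈ (powersetCard (#U - 1) U).filter (i ∈ ·), f V = ∑ j ∈ U.erase i, f (U.erase j) := by
  refine (sum_bij (fun j _ => U.erase j) (fun j hj => ?_)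
    (fun j₁ hj₁ j₂ hj₂ h => U.erase_injOn (mem_of_mem_erase hj₁) (mem_of_mem_erase hj₂) h)
    (fun V hV => ?_) fun _ _ => rfl).symm
  · obtain ⟨hji, hjU⟩ := mem_erase.1 hj
    simp [card_erase_of_mem hjU, hi, Ne.symm hji, erase_subset]
  · obtain ⟨hV, hiV⟩ := mem_filter.1 hV
    obtain ⟨hVU, hVcard⟩ := mem_powersetCard.1 hV
    have hcov : V ⋖ U := covBy_iff_card_sdiff_eq_one.2
      ⟨hVU, by rw [card_sdiff_of_subset hVU, hVcard]; have := card_pos.2 ⟨i, hi⟩; omega⟩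
    obtain ⟨j, hjU, rfl⟩ := hcov.exists_finset_erase
    exact ⟨j, mem_erase.2 ⟨fun h => by simp [h] at hiV, hjU⟩, rfl⟩

end Decomposition

section WaterLevel

variable {ι : Type*} [Fintype ι]

/-- `f_β(λ)` turns out to be the largest `x` with `β x ≤ ∑ₗ min(λₗ, x)` (`fLP_eq_waterLevel`). -/
def waterSet (lam : ι → ℝ) (β : ℕ) : Set ℝ := {x | 0 ≤ x ∧ β * x ≤ ∑ l, min (lam l) x}

noncomputable def waterLevel (lam : ι → ℝ) (β : ℕ) : ℝ := sSup (waterSet lam β)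

variable {lam : ι → ℝ} {β β' : ℕ}

lemma isClosed_waterSet : IsClosed (waterSet lam β) :=
  (isClosed_le continuous_const continuous_id).inter <| isClosed_le (continuous_const.mul
    continuous_id) (continuous_finsetSum _ fun _ _ => continuous_const.min continuous_id)

lemma zero_mem_waterSet (hlam : ∀ l, 0 ≤ lam l) : 0 ∈ waterSet lam β :=
  ⟨le_rfl, by simpa using sum_nonneg fun l _ => le_min (hlam l) le_rfl⟩

lemma waterSet_bddAbove (hβ : 1 ≤ β) : BddAbove (waterSet lam β) :=
  ⟨∑ l, lam l, fun x ⟨hx0, hx⟩ => calc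
    x ≤ β * x := le_mul_of_one_le_left hx0 (by exact_mod_cast hβ)
    _ ≤ ∑ l, min (lam l) x := hx
    _ ≤ ∑ l, lam l := sum_le_sum fun l _ => min_le_left _ _⟩

lemma le_waterLevel (hβ : 1 ≤ β) {x : ℝ} (hx : x ∈ waterSet lam β) : x ≤ waterLevel lam β :=
  le_csSup (waterSet_bddAbove hβ) hx

lemma waterLevel_mem (hlam : ∀ l, 0 ≤ lam l) (hβ : 1 ≤ β) :
    waterLevel lam β ∈ waterSet lam β :=
  isClosed_waterSet.csSup_mem ⟨0, zero_mem_waterSet hlam⟩ (waterSet_bddAbove hβ)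

lemma waterSet_anti (h : β' ≤ β) : waterSet lam β ⊆ waterSet lam β' := fun _ ⟨hx0, hx⟩ =>
  ⟨hx0, le_trans (mul_le_mul_of_nonneg_right (by exact_mod_cast h) hx0) hx⟩

lemma waterLevel_anti (hlam : ∀ l, 0 ≤ lam l) (hβ' : 1 ≤ β') (h : β' ≤ β) :
    waterLevel lam β ≤ waterLevel lam β' :=
  le_waterLevel hβ' (waterSet_anti h (waterLevel_mem hlam (hβ'.trans h)))

/-- If the inequality were strict, the level could be raised a little. -/
lemma waterLevel_eq (hlam : ∀ l, 0 ≤ lam l) (hβ : 1 ≤ β) :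
    β * waterLevel lam β = ∑ l, min (lam l) (waterLevel lam β) := by
  set w := waterLevel lam β
  obtain ⟨hw0, hw⟩ := waterLevel_mem hlam hβ
  refine hw.antisymm (not_lt.1 fun hlt => ?_)
  have hβ0 : (0 : ℝ) < β := by exact_mod_cast hβ
  set ε := (∑ l, min (lam l) w - β * w) / β
  have hε : 0 < ε := div_pos (sub_pos.2 hlt) hβ0
  have hmem : w + ε ∈ waterSet lam β := ⟨by positivity, calc
    β * (w + ε) = ∑ l, min (lam l) w := by simp only [ε]; field_simp; ring
    _ ≤ ∑ l, min (lam l) (w + ε) := sum_le_sum fun l _ => min_le_min_left _ (by linarith)⟩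
  linarith [le_waterLevel hβ hmem]

end WaterLevel

section LinearProgram

variable {L β : ℕ} {lam : Fin L → ℝ}

lemma mem_OmegaL {U : Finset (Fin L)} : U ∈ OmegaL L β ↔ #U = β := by
  simp [OmegaL]

variable (β) in
def load (c : Finset (Fin L) → ℝ) (l : Fin L) : ℝ :=
  ∑ U ∈ (OmegaL L β).filter (fun U => l ∈ U), c U

def IsFeasible (L : ℕ) (lam : Fin L → ℝ) (β : ℕ) (c : Finset (Fin L) → ℝ) : Prop :=
  (∀ U ∈ OmegaL L β, 0 ≤ c U) ∧ ∀ l, load β c l ≤ lam l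

variable (β) in
lemma sum_load (c : Finset (Fin L) → ℝ) : ∑ l, load β c l = β * ∑ U ∈ OmegaL L β, c U := by
  simp only [load]
  rw [sum_comm' (t' := OmegaL L β) (s' := id) (by simp [and_comm]), mul_sum]
  refine sum_congr rfl fun U hU => ?_
  rw [sum_const, nsmul_eq_mul, id, mem_OmegaL.1 hU]

lemma load_le_sum {c : Finset (Fin L) → ℝ} (hc : ∀ U ∈ OmegaL L β, 0 ≤ c U) (l : Fin L) :
    load β c l ≤ ∑ U ∈ OmegaL L β, c U :=
  sum_le_sum_of_subset_of_nonneg (filter_subset _ _) fun U hU _ => hc U hU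

lemma IsFeasible.sum_mem_waterSet {c : Finset (Fin L) → ℝ} (hc : IsFeasible L lam β c) :
    ∑ U ∈ OmegaL L β, c U ∈ waterSet lam β :=
  ⟨sum_nonneg hc.1, (sum_load β c).symm.le.trans
    (sum_le_sum fun l _ => le_min (hc.2 l) (load_le_sum hc.1 l))⟩

lemma exists_isFeasible_sum_eq_waterLevel (hlam : ∀ l, 0 ≤ lam l) (hβ : 1 ≤ β) (hβL : β ≤ L) :
    ∃ c, IsFeasible L lam β c ∧ ∑ U ∈ OmegaL L β, c U = waterLevel lam β := by
  set w := waterLevel lam β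
  rcases (waterLevel_mem hlam hβ).1.eq_or_lt with hw | hw
  · exact ⟨0, ⟨fun _ _ => le_rfl, fun l => by simpa [load] using hlam l⟩, by simp [w, ← hw]⟩
  obtain ⟨p, hp0, hp1, hpload⟩ := exists_weights_powersetCard_of_sum_eq
    (x := fun l => min (lam l) w / w) (by simpa using hβL)
    (fun l => div_nonneg (le_min (hlam l) hw.le) hw.le)
    (fun l => div_le_one_of_le₀ (min_le_right _ _) hw.le)
    (by rw [← sum_div, ← waterLevel_eq hlam hβ, mul_div_cancel_right₀ _ hw.ne'])
  refine ⟨fun U => w * p U, ⟨fun U _ => mul_nonneg hw.le (hp0 U), fun l => ?_⟩, ?_⟩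
  · rw [load, ← mul_sum]
    simp only [OmegaL] at hpload ⊢
    rw [hpload, mul_div_cancel₀ _ hw.ne']
    exact min_le_left _ _
  · rw [← mul_sum, OmegaL, hp1, mul_one]

lemma fLP_eq_waterLevel (hlam : ∀ l, 0 ≤ lam l) (hβ : 1 ≤ β) (hβL : β ≤ L) :
    fLP L lam β = waterLevel lam β := by
  obtain ⟨c, hc, hcsum⟩ := exists_isFeasible_sum_eq_waterLevel hlam hβ hβL
  unfold fLP
  refine le_antisymm (csSup_le ⟨_, c, hc.1, hc.2, rfl⟩ ?_)
    (le_csSup ⟨waterLevel lam β, ?_⟩ ⟨c, hc.1, hc.2, hcsum.symm⟩) <;>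
  · rintro x ⟨c, hc0, hcl, rfl⟩
    exact le_waterLevel hβ (IsFeasible.sum_mem_waterSet ⟨hc0, hcl⟩)

lemma isOptimal_of_load_eq (hlam : ∀ l, 0 ≤ lam l) (hβ : 1 ≤ β) (hβL : β ≤ L)
    {c : Finset (Fin L) → ℝ} (hc : ∀ U ∈ OmegaL L β, 0 ≤ c U)
    (hload : ∀ l, load β c l = min (lam l) (waterLevel lam β)) : IsOptimal L lam β c := by
  refine ⟨hc, fun l => (hload l).trans_le (min_le_left _ _), ?_⟩
  have hβ0 : (β : ℝ) ≠ 0 := by positivity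
  apply mul_left_cancel₀ hβ0
  rw [← sum_load, funext hload, ← waterLevel_eq hlam hβ, fLP_eq_waterLevel hlam hβ hβL]

end LinearProgram

section OptimalSolution

variable {L α : ℕ} {lam : Fin L → ℝ} {c : Finset (Fin L) → ℝ}

lemma IsOptimal.load_eq_min (hlam : ∀ l, 0 ≤ lam l) (hα : 1 ≤ α) (hαL : α ≤ L)
    (hc : IsOptimal L lam α c) (l : Fin L) : load α c l = min (lam l) (waterLevel lam α) := by
  have hsum : ∑ U ∈ OmegaL L α, c U = waterLevel lam α :=
    hc.2.2.trans (fLP_eq_waterLevel hlam hα hαL)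
  have hle : ∀ l ∈ univ, load α c l ≤ min (lam l) (waterLevel lam α) := fun l _ =>
    le_min (hc.2.1 l) (hsum ▸ load_le_sum hc.1 l)
  exact (sum_eq_sum_iff_of_le hle).1 (by rw [sum_load, hsum, waterLevel_eq hlam hα]) l (mem_univ l)

/-- A node with `λₗ ≥ w_α` carries the whole mass of `c`. -/
lemma IsOptimal.mem_of_waterLevel_le (hlam : ∀ l, 0 ≤ lam l) (hα : 1 ≤ α) (hαL : α ≤ L)
    (hc : IsOptimal L lam α c) {U : Finset (Fin L)} (hU : U ∈ OmegaL L α) (hcU : c U ≠ 0)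
    {l : Fin L} (hl : waterLevel lam α ≤ lam l) : l ∈ U := by
  by_contra hlU
  have hrest : ∑ U ∈ (OmegaL L α).filter (fun U => l ∉ U), c U = 0 := by
    have := sum_filter_add_sum_filter_not (OmegaL L α) (fun U => l ∈ U) c
    rw [← load, hc.load_eq_min hlam hα hαL, min_eq_right hl,
      hc.2.2, fLP_eq_waterLevel hlam hα hαL] at this
    linarith
  exact hcU ((sum_eq_zero_iff_of_nonneg fun U hU => hc.1 U (mem_filter.1 hU).1).1 hrest U
    (mem_filter.2 ⟨hU, hlU⟩))

end OptimalSolution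

lemma load_sum_filter_subset {L β γ : ℕ} (g : Finset (Fin L) → Finset (Fin L) → ℝ)
    (c : Finset (Fin L) → ℝ) (l : Fin L) :
    load β (fun V => ∑ U ∈ (OmegaL L γ).filter (fun U => V ⊆ U), g U V * c U) l =
      ∑ U ∈ (OmegaL L γ).filter (fun U => l ∈ U),
        (∑ V ∈ (powersetCard β U).filter (fun V => l ∈ V), g U V) * c U := by
  simp only [load, sum_mul]
  refine sum_comm' fun V U => ?_
  simp only [OmegaL, mem_filter, mem_powersetCard, subset_univ, true_and]
  constructor
  · rintro ⟨⟨hV, hlV⟩, hU, hVU⟩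
    exact ⟨⟨⟨hVU, hV⟩, hlV⟩, hU, hVU hlV⟩
  · rintro ⟨⟨⟨hVU, hV⟩, hlV⟩, hU, -⟩
    exact ⟨⟨hV, hlV⟩, hU, hVU⟩

section Pushdown

variable {ι : Type*} (lam : ι → ℝ) (s t : ℝ)

def levelGain (l : ι) : ℝ := min (lam l) t - min (lam l) s

/-- On `V = U.erase j` this is the weight of the missing element `j`; summing over `U \ V` avoids
choosing `j`. -/
noncomputable def coverWeight [DecidableEq ι] (U V : Finset ι) : ℝ :=
  ∑ j ∈ U \ V, (t - s - levelGain lam s t j) / s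

variable {lam s t}

lemma levelGain_nonneg (hst : s ≤ t) (l : ι) : 0 ≤ levelGain lam s t l :=
  sub_nonneg.2 (min_le_min_left _ hst)

lemma levelGain_le_sub (hst : s ≤ t) (l : ι) : levelGain lam s t l ≤ t - s := by
  simp only [levelGain]
  rcases le_total (lam l) s with h | h
  · rw [min_eq_left h, min_eq_left (h.trans hst)]; linarith
  · rw [min_eq_right h]; linarith [min_le_right (lam l) t]

lemma levelGain_eq_zero (hst : s ≤ t) {l : ι} (h : lam l ≤ s) : levelGain lam s t l = 0 := by
  rw [levelGain, min_eq_left h, min_eq_left (h.trans hst), sub_self]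

lemma one_add_levelGain_div_mul (hs : 0 < s) (hst : s ≤ t) (l : ι) :
    (1 + levelGain lam s t l / s) * min (lam l) s = min (lam l) t := by
  rcases le_total (lam l) s with h | h
  · rw [levelGain_eq_zero hst h, zero_div, add_zero, one_mul, min_eq_left h,
      min_eq_left (h.trans hst)]
  · rw [levelGain, min_eq_right h]
    field_simp
    ring

variable [DecidableEq ι]

lemma coverWeight_nonneg (hs : 0 < s) (hst : s ≤ t) (U V : Finset ι) :
    0 ≤ coverWeight lam s t U V :=
  sum_nonneg fun j _ => div_nonneg (by linarith [levelGain_le_sub (lam := lam) hst j]) hs.le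

variable [Fintype ι] {α : ℕ}

lemma sum_coverWeight (hs : 0 < s) (hαs : α * s = ∑ l, min (lam l) s)
    (hαt : ((α - 1 : ℕ) : ℝ) * t = ∑ l, min (lam l) t) {U : Finset ι} (hU : #U = α)
    {i : ι} (hi : i ∈ U) :
    ∑ V ∈ (powersetCard (α - 1) U).filter (fun V => i ∈ V), coverWeight lam s t U V =
      1 + (∑ l, levelGain lam s t l - ∑ j ∈ U.erase i, levelGain lam s t j) / s := by
  have hgain : ∑ l, levelGain lam s t l = ((α - 1 : ℕ) : ℝ) * t - α * s := by
    rw [hαs, hαt, ← sum_sub_distrib]; rfl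
  have hα : 1 ≤ α := hU ▸ card_pos.2 ⟨i, hi⟩
  rw [← hU, sum_filter_mem_powersetCard_card_sub_one hi, sum_congr rfl fun j hj => by
    rw [coverWeight, sdiff_erase_self (mem_of_mem_erase hj), sum_singleton]]
  rw [← sum_div, sum_sub_distrib, sum_sub_distrib, sum_const, sum_const, card_erase_of_mem hi,
    hgain, hU, nsmul_eq_mul, nsmul_eq_mul, Nat.cast_sub hα, Nat.cast_one]
  field_simp
  ring

variable (hs : 0 < s) (hαs : α * s = ∑ l, min (lam l) s)
  (hαt : ((α - 1 : ℕ) : ℝ) * t = ∑ l, min (lam l) t) {U : Finset ι} (hU : #U = α)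
include hs hαs hαt hU

lemma one_le_sum_coverWeight (hst : s ≤ t) {i : ι} (hi : i ∈ U) :
    1 ≤ ∑ V ∈ (powersetCard (α - 1) U).filter (fun V => i ∈ V), coverWeight lam s t U V := by
  rw [sum_coverWeight hs hαs hαt hU hi, le_add_iff_nonneg_right]
  exact div_nonneg (sub_nonneg.2 (sum_le_sum_of_subset_of_nonneg (subset_univ _)
    fun l _ _ => levelGain_nonneg hst l)) hs.le

lemma sum_coverWeight_of_levelGain_eq_zero (h : ∀ l ∉ U, levelGain lam s t l = 0)
    {i : ι} (hi : i ∈ U) :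
    ∑ V ∈ (powersetCard (α - 1) U).filter (fun V => i ∈ V), coverWeight lam s t U V =
      1 + levelGain lam s t i / s := by
  rw [sum_coverWeight hs hαs hαt hU hi, ← sum_subset (subset_univ U) fun l _ hl => h l hl,
    ← add_sum_erase U _ hi, add_sub_cancel_right]

end Pushdown

theorem yeung_zhang_lp_pushdown_general
    {L : ℕ} (lam : Fin L → ℝ) (hlam : ∀ l, 0 ≤ lam l)
    (α : ℕ) (hα1 : 2 ≤ α) (hα2 : α ≤ L)
    (c : Finset (Fin L) → ℝ) (hc : IsOptimal L lam α c) (hf : 0 < fLP L lam α) :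
    ∃ g : Finset (Fin L) → Finset (Fin L) → ℝ,
      (∀ U ∈ OmegaL L α, ∀ V ∈ Finset.powersetCard (α - 1) U, 0 ≤ g U V) ∧
      (∀ U ∈ OmegaL L α, ∀ i ∈ U,
        1 ≤ ∑ V ∈ (Finset.powersetCard (α - 1) U).filter (fun V => i ∈ V), g U V) ∧
      IsOptimal L lam (α - 1)
        (fun V => ∑ U ∈ (OmegaL L α).filter (fun U => V ⊆ U), g U V * c U) := by
  have hα : 1 ≤ α := by omega
  set s := waterLevel lam α
  set t := waterLevel lam (α - 1)
  have hs : 0 < s := hf.trans_eq (fLP_eq_waterLevel hlam hα hα2)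
  have hst : s ≤ t := waterLevel_anti hlam (by omega) (by omega)
  have hαs : α * s = ∑ l, min (lam l) s := waterLevel_eq hlam hα
  have hαt : ((α - 1 : ℕ) : ℝ) * t = ∑ l, min (lam l) t := waterLevel_eq hlam (by omega)
  refine ⟨coverWeight lam s t, fun U _ V _ => coverWeight_nonneg hs hst U V,
    fun U hU i hi => one_le_sum_coverWeight hs hαs hαt (mem_OmegaL.1 hU) hst hi,
    isOptimal_of_load_eq hlam (by omega) (by omega) (fun V _ => sum_nonneg fun U hU =>
      mul_nonneg (coverWeight_nonneg hs hst U V) (hc.1 U (mem_filter.1 hU).1)) fun l => ?_⟩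
  rw [load_sum_filter_subset, ← one_add_levelGain_div_mul hs hst,
    ← hc.load_eq_min hlam hα hα2, load, mul_sum]
  refine sum_congr rfl fun U hU => ?_
  obtain ⟨hU, hlU⟩ := mem_filter.1 hU
  rcases eq_or_ne (c U) 0 with hcU | hcU
  · simp [hcU]
  -- every node outside a charged set sits below the level `s`, so gains nothing
  rw [sum_coverWeight_of_levelGain_eq_zero hs hαs hαt (mem_OmegaL.1 hU) (fun l' hl' =>
    levelGain_eq_zero hst (not_le.1 (mt (hc.mem_of_waterLevel_le hlam hα hα2 hU hcU) hl')).le) hlU]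

/-- **Linear programming result of Yeung and Zhang** (Theorem 5): any optimal solution of the
level-`α` linear program with positive value can be pushed down, via fractional covers
`g_U` of the hypergraphs `(U, 𝒱_U)` (with `𝒱_U` the `(α−1)`-element subsets of `U`), to an
optimal solution of the level-`(α−1)` linear program. -/
theorem yeung_zhang_lp_pushdown
    {L : ℕ} (hL : 2 ≤ L) (lam : Fin L → ℝ) (hlam : ∀ l, 0 ≤ lam l)
    (α : ℕ) (hα1 : 2 ≤ α) (hα2 : α ≤ L)
    (c : Finset (Fin L) → ℝ) (hc : IsOptimal L lam α c) (hf : 0 < fLP L lam α) :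
    ∃ g : Finset (Fin L) → Finset (Fin L) → ℝ,
      (∀ U ∈ OmegaL L α, ∀ V ∈ Finset.powersetCard (α - 1) U, 0 ≤ g U V) ∧
      (∀ U ∈ OmegaL L α, ∀ i ∈ U,
        1 ≤ ∑ V ∈ (Finset.powersetCard (α - 1) U).filter (fun V => i ∈ V), g U V) ∧
      IsOptimal L lam (α - 1)
        (fun V => ∑ U ∈ (OmegaL L α).filter (fun U => V ⊆ U), g U V * c U) :=
  yeung_zhang_lp_pushdown_general lam hlam α hα1 hα2 c hc hf
end

section
/- The sliding-window chain is not expressible via fractional covers: Let L ≥ 3 and 2 ≤ α ≤ L−1, and fix l ∈ {1,…,L}. (i) Any fractional cover g of the hypergraph (W_l^{(α)}, {W_l^{(α−1)}, W_{⟨l+1⟩}^{(α−1)}}) satisfies g(W_l^{(α−1)}) ≥ 1 and g(W_{⟨l+1⟩}^{(α−1)}) ≥ 1. (ii) Consequently, if c assigns c(W_m^{(β)}) := 1/β to every sliding window of length β ∈ {1,…,L−1}, then for any α with 2 < α ≤ L−1 and any fractional covers g_{W_l^{(α)}} and g_{W_{⟨l−1⟩}^{(α)}} of the respective hypergraphs,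 g_{W_l^{(α)}}(W_l^{(α−1)}) c(W_l^{(α)}) + g_{W_{⟨l−1⟩}^{(α)}}(W_l^{(α−1)}) c(W_{⟨l−1⟩}^{(α)}) ≥ 2/α > 1/(α−1) = c(W_l^{(α−1)}). -/
/-- `⟨l+1⟩`: the cyclic successor of `l` in `{1,…,L}` (0-indexed). -/
def nxt {L : ℕ} (l : Fin L) : Fin L := ⟨((l : ℕ) + 1) % L, Nat.mod_lt _ l.pos⟩

/-- `⟨l−1⟩`: the cyclic predecessor of `l` in `{1,…,L}` (0-indexed). -/
def prv {L : ℕ} (l : Fin L) : Fin L := ⟨((l : ℕ) + (L - 1)) % L, Nat.mod_lt _ l.pos⟩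

open Finset

section PairSum

variable {X M : Type*} [DecidableEq X] [AddCommMonoid M]

theorem sum_filter_mem_pair_of_mem_of_notMem {A B : Finset X} {i : X} (hA : i ∈ A) (hB : i ∉ B)
    (g : Finset X → M) :
    ∑ V ∈ ({A, B} : Finset (Finset X)).filter (fun V => i ∈ V), g V = g A := by
  rw [filter_insert, if_pos hA, filter_singleton, if_neg hB, insert_empty, sum_singleton]

theorem sum_filter_mem_pair_of_notMem_of_mem {A B : Finset X} {i : X} (hA : i ∉ A) (hB : i ∈ B)
    (g : Finset X → M) :
    ∑ V ∈ ({A, B} : Finset (Finset X)).filter (fun V => i ∈ V), g V = g B := by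
  rw [pair_comm, sum_filter_mem_pair_of_mem_of_notMem hB hA]

end PairSum

section CyclicShift

variable {L : ℕ}

/-- The point `⟨m + k⟩`. -/
def cycShift (m : Fin L) (k : ℕ) : Fin L := ⟨((m : ℕ) + k) % L, Nat.mod_lt _ m.pos⟩

theorem win_eq_image_cycShift (m : Fin L) (β : ℕ) : win L m β = (range β).image (cycShift m) :=
  rfl

theorem nxt_eq_cycShift (m : Fin L) : nxt m = cycShift m 1 := rfl

theorem prv_eq_cycShift (m : Fin L) : prv m = cycShift m (L - 1) := rfl

theorem cycShift_zero (m : Fin L) : cycShift m 0 = m :=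
  Fin.ext (Nat.mod_eq_of_lt m.isLt)

theorem cycShift_cycShift (m : Fin L) (j k : ℕ) :
    cycShift (cycShift m j) k = cycShift m (j + k) :=
  Fin.ext (by simp only [cycShift, Nat.mod_add_mod, add_assoc])

theorem cycShift_length (m : Fin L) : cycShift m L = m :=
  Fin.ext (by simp only [cycShift, Nat.add_mod_right, Nat.mod_eq_of_lt m.isLt])

theorem nxt_prv (m : Fin L) : nxt (prv m) = m := by
  rw [nxt_eq_cycShift, prv_eq_cycShift, cycShift_cycShift,
    Nat.sub_add_cancel (Nat.one_le_of_lt m.pos), cycShift_length]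

theorem cycShift_nxt_length_sub_one (m : Fin L) : cycShift (nxt m) (L - 1) = m := by
  rw [nxt_eq_cycShift, cycShift_cycShift,
    Nat.add_sub_cancel' (Nat.one_le_of_lt m.pos), cycShift_length]

theorem cycShift_inj {m : Fin L} {j k : ℕ} (hj : j < L) (hk : k < L)
    (h : cycShift m j = cycShift m k) : j = k := by
  have h' := Nat.ModEq.add_left_cancel' (m : ℕ) (Fin.ext_iff.mp h : Nat.ModEq L _ _)
  rwa [Nat.ModEq, Nat.mod_eq_of_lt hj, Nat.mod_eq_of_lt hk] at h'

theorem cycShift_mem_win_iff {m : Fin L} {k β : ℕ} (hk : k < L) (hβ : β ≤ L) :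
    cycShift m k ∈ win L m β ↔ k < β := by
  rw [win_eq_image_cycShift, mem_image]
  constructor
  · rintro ⟨j, hj, hjk⟩
    rw [mem_range] at hj
    rwa [← cycShift_inj (hj.trans_le hβ) hk hjk]
  · exact fun h => ⟨k, mem_range.mpr h, rfl⟩

theorem self_mem_win {m : Fin L} {β : ℕ} (hβ : 0 < β) : m ∈ win L m β :=
  mem_image.mpr ⟨0, mem_range.mpr hβ, cycShift_zero m⟩

end CyclicShift

theorem one_le_weight_children_of_cover_win {L α : ℕ} (hα1 : 2 ≤ α) (hα2 : α ≤ L)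
    (m : Fin L) (g : Finset (Fin L) → ℝ)
    (hcover : ∀ i ∈ win L m α,
      1 ≤ ∑ V ∈ ({win L m (α - 1), win L (nxt m) (α - 1)} :
            Finset (Finset (Fin L))).filter (fun V => i ∈ V), g V) :
    1 ≤ g (win L m (α - 1)) ∧ 1 ≤ g (win L (nxt m) (α - 1)) := by
  have hα : α - 1 ≤ L := by omega
  have first_mem : m ∈ win L m α := self_mem_win (by omega)
  have first_mem_left : m ∈ win L m (α - 1) := self_mem_win (by omega)
  have first_notMem_right : m ∉ win L (nxt m) (α - 1) := by
    have h := (cycShift_mem_win_iff (m := nxt m) (k := L - 1) (by omega) hα).not.mpr (by omega)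
    rwa [cycShift_nxt_length_sub_one] at h
  have last_mem : cycShift m (α - 1) ∈ win L m α :=
    (cycShift_mem_win_iff (by omega) hα2).mpr (by omega)
  have last_notMem_left : cycShift m (α - 1) ∉ win L m (α - 1) := by
    rw [cycShift_mem_win_iff (by omega) hα]
    omega
  have last_mem_right : cycShift m (α - 1) ∈ win L (nxt m) (α - 1) := by
    rw [show α - 1 = 1 + (α - 2) by omega, ← cycShift_cycShift, ← nxt_eq_cycShift,
      cycShift_mem_win_iff (by omega) (by omega)]
    omega
  constructor
  · simpa only [sum_filter_mem_pair_of_mem_of_notMem first_mem_left first_notMem_right]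
      using hcover _ first_mem
  · simpa only [sum_filter_mem_pair_of_notMem_of_mem last_notMem_left last_mem_right]
      using hcover _ last_mem

theorem sliding_window_not_fractional_cover_general
    {L : ℕ} (α : ℕ) (hα1 : 2 ≤ α) (hα2 : α ≤ L - 1) (l : Fin L) :
    (∀ g : Finset (Fin L) → ℝ,
      (∀ V ∈ ({win L l (α - 1), win L (nxt l) (α - 1)} : Finset (Finset (Fin L))), 0 ≤ g V) →
      (∀ i ∈ win L l α,
        1 ≤ ∑ V ∈ ({win L l (α - 1), win L (nxt l) (α - 1)} :
              Finset (Finset (Fin L))).filter (fun V => i ∈ V), g V) →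
      1 ≤ g (win L l (α - 1)) ∧ 1 ≤ g (win L (nxt l) (α - 1))) ∧
    (2 < α →
      ∀ g₁ g₂ : Finset (Fin L) → ℝ,
        (∀ V ∈ ({win L l (α - 1), win L (nxt l) (α - 1)} : Finset (Finset (Fin L))), 0 ≤ g₁ V) →
        (∀ i ∈ win L l α,
          1 ≤ ∑ V ∈ ({win L l (α - 1), win L (nxt l) (α - 1)} :
                Finset (Finset (Fin L))).filter (fun V => i ∈ V), g₁ V) →
        (∀ V ∈ ({win L (prv l) (α - 1), win L l (α - 1)} : Finset (Finset (Fin L))), 0 ≤ g₂ V) →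
        (∀ i ∈ win L (prv l) α,
          1 ≤ ∑ V ∈ ({win L (prv l) (α - 1), win L l (α - 1)} :
                Finset (Finset (Fin L))).filter (fun V => i ∈ V), g₂ V) →
        g₁ (win L l (α - 1)) * (1 / (α : ℝ)) + g₂ (win L l (α - 1)) * (1 / (α : ℝ)) ≥ 2 / (α : ℝ) ∧
          (2 / (α : ℝ) > 1 / ((α : ℝ) - 1))) := by
  have hαL : α ≤ L := by omega
  refine ⟨fun g _ hg => one_le_weight_children_of_cover_win hα1 hαL l g hg,
    fun hα3 g₁ g₂ _ hg₁ _ hg₂ => ⟨?_, ?_⟩⟩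
  · have h₁ := (one_le_weight_children_of_cover_win hα1 hαL l g₁ hg₁).1
    have h₂ := (one_le_weight_children_of_cover_win hα1 hαL (prv l) g₂
      (by simpa only [nxt_prv] using hg₂)).2
    rw [nxt_prv] at h₂
    calc 2 / (α : ℝ) = (1 + 1) * (1 / (α : ℝ)) := by ring
      _ ≤ (g₁ (win L l (α - 1)) + g₂ (win L l (α - 1))) * (1 / (α : ℝ)) := by gcongr
      _ = _ := add_mul _ _ _
  · have hα : (3 : ℝ) ≤ α := by exact_mod_cast hα3
    rw [gt_iff_lt, div_lt_div_iff₀ (by linarith) (by linarith)]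
    linarith

/-- **The sliding-window chain is not expressible via fractional covers**:
(i) any fractional cover `g` of the hypergraph `(W_l^{(α)}, {W_l^{(α−1)}, W_{⟨l+1⟩}^{(α−1)}})`
satisfies `g(W_l^{(α−1)}) ≥ 1` and `g(W_{⟨l+1⟩}^{(α−1)}) ≥ 1`;
(ii) consequently, with the weights `c(W_m^{(β)}) = 1/β`, for `2 < α ≤ L−1` and any fractional
covers `g₁` of the hypergraph of `W_l^{(α)}` and `g₂` of the hypergraph of `W_{⟨l−1⟩}^{(α)}`,
`g₁(W_l^{(α−1)})·(1/α) + g₂(W_l^{(α−1)})·(1/α) ≥ 2/α > 1/(α−1) = c(W_l^{(α−1)})`. -/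
theorem sliding_window_not_fractional_cover
    {L : ℕ} (hL : 3 ≤ L) (α : ℕ) (hα1 : 2 ≤ α) (hα2 : α ≤ L - 1) (l : Fin L) :
    (∀ g : Finset (Fin L) → ℝ,
      (∀ V ∈ ({win L l (α - 1), win L (nxt l) (α - 1)} : Finset (Finset (Fin L))), 0 ≤ g V) →
      (∀ i ∈ win L l α,
        1 ≤ ∑ V ∈ ({win L l (α - 1), win L (nxt l) (α - 1)} :
              Finset (Finset (Fin L))).filter (fun V => i ∈ V), g V) →
      1 ≤ g (win L l (α - 1)) ∧ 1 ≤ g (win L (nxt l) (α - 1))) ∧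
    (2 < α →
      ∀ g₁ g₂ : Finset (Fin L) → ℝ,
        (∀ V ∈ ({win L l (α - 1), win L (nxt l) (α - 1)} : Finset (Finset (Fin L))), 0 ≤ g₁ V) →
        (∀ i ∈ win L l α,
          1 ≤ ∑ V ∈ ({win L l (α - 1), win L (nxt l) (α - 1)} :
                Finset (Finset (Fin L))).filter (fun V => i ∈ V), g₁ V) →
        (∀ V ∈ ({win L (prv l) (α - 1), win L l (α - 1)} : Finset (Finset (Fin L))), 0 ≤ g₂ V) →
        (∀ i ∈ win L (prv l) α,
          1 ≤ ∑ V ∈ ({win L (prv l) (α - 1), win L l (α - 1)} :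
                Finset (Finset (Fin L))).filter (fun V => i ∈ V), g₂ V) →
        g₁ (win L l (α - 1)) * (1 / (α : ℝ)) + g₂ (win L l (α - 1)) * (1 / (α : ℝ)) ≥ 2 / (α : ℝ) ∧
          (2 / (α : ℝ) > 1 / ((α : ℝ) - 1))) :=
  sliding_window_not_fractional_cover_general α hα1 hα2 l
end

section
/- Reduction of the supporting-hyperplane family for SMDC-A (core of Proposition 2): Let L ≥ 1, let λ = (λ_1,…,λ_L) with all λ_l ≥ 0, let H_1,…,H_L ≥ 0, and let (R_0, R_1,…,R_L) be a tuple of nonnegative reals. Then the following are equivalent: (i) for every λ_0 ≥ 0, λ_0 R_0 + ∑_{l=1}^{L} λ_l R_l ≥ ∑_{α=1}^{L} min(f_α(λ), λ_0) H_α; (ii) for every m ∈ {1,…,L}, f_m(λ) R_0 + ∑_{l=1}^{L} λ_l R_l ≥ f_m(λ) ∑_{α=1}^{m} H_α + ∑_{α=m+1}^{L} f_α(λ) H_α. -/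
open Finset

section PiecewiseLinear

variable {ι : Type*} {s : Finset ι} {a w : ι → ℝ} {R0 S : ℝ}

lemma min_combo_eq_of_le_or_le {b p q t u : ℝ} (hpq : p ≤ q) (ht : 0 ≤ t) (hu : 0 ≤ u)
    (htu : t + u = 1) (hb : b ≤ p ∨ q ≤ b) :
    min b (t * p + u * q) = t * min b p + u * min b q := by
  obtain rfl : t = 1 - u := eq_sub_of_add_eq htu
  rcases hb with hbp | hqb
  · rw [min_eq_left (by nlinarith), min_eq_left hbp, min_eq_left (hbp.trans hpq)]
    ring
  · rw [min_eq_right (by nlinarith), min_eq_right (hpq.trans hqb), min_eq_right hqb]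

lemma sum_min_mul_le_of_mem_Icc {p q x : ℝ} (hpq : p ≤ q) (hgap : ∀ i ∈ s, a i ≤ p ∨ q ≤ a i)
    (hp : ∑ i ∈ s, min (a i) p * w i ≤ p * R0 + S)
    (hq : ∑ i ∈ s, min (a i) q * w i ≤ q * R0 + S) (hx : x ∈ Set.Icc p q) :
    ∑ i ∈ s, min (a i) x * w i ≤ x * R0 + S := by
  rw [← segment_eq_Icc hpq] at hx
  obtain ⟨t, u, ht, hu, htu, rfl⟩ := hx
  simp only [smul_eq_mul] at *
  have hsum : ∑ i ∈ s, min (a i) (t * p + u * q) * w i =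
      t * ∑ i ∈ s, min (a i) p * w i + u * ∑ i ∈ s, min (a i) q * w i := by
    rw [mul_sum, mul_sum, ← sum_add_distrib]
    refine sum_congr rfl fun i hi => ?_
    rw [min_combo_eq_of_le_or_le hpq ht hu htu (hgap i hi)]
    ring
  rw [hsum]
  linear_combination mul_le_mul_of_nonneg_left hp ht + mul_le_mul_of_nonneg_left hq hu + S * htu

lemma sum_min_mul_le_of_forall_le (hR0 : 0 ≤ R0) (hS : 0 ≤ S) (ha : ∀ i ∈ s, 0 ≤ a i)
    (hbreak : ∀ j ∈ s, ∑ i ∈ s, min (a i) (a j) * w i ≤ a j * R0 + S) {x : ℝ} (hx : 0 ≤ x) :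
    ∑ i ∈ s, min (a i) x * w i ≤ x * R0 + S := by
  classical
  set P := insert 0 (s.image a)
  have haP : ∀ i ∈ s, a i ∈ P := fun i hi => mem_insert_of_mem (mem_image_of_mem a hi)
  have hP : ∀ p ∈ P, ∑ i ∈ s, min (a i) p * w i ≤ p * R0 + S := by
    simp only [P, mem_insert, mem_image]
    rintro p (rfl | ⟨j, hj, rfl⟩)
    · rw [sum_eq_zero fun i hi => by rw [min_eq_right (ha i hi), zero_mul]]
      simpa using hS
    · exact hbreak j hj
  obtain ⟨p, hpP, hpx, hpmax⟩ : ∃ p ∈ P, p ≤ x ∧ ∀ y ∈ P, y ≤ x → y ≤ p := by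
    obtain ⟨p, hp, hmax⟩ := (P.filter (· ≤ x)).exists_max_image id ⟨0, by simp [P, hx]⟩
    simp only [mem_filter, id] at hp hmax
    exact ⟨p, hp.1, hp.2, fun y hy hyx => hmax y ⟨hy, hyx⟩⟩
  by_cases habove : ∃ q ∈ P, x ≤ q
  · obtain ⟨q, hq, hmin⟩ :=
      (P.filter (x ≤ ·)).exists_min_image id (by simpa [Finset.Nonempty] using habove)
    simp only [mem_filter, id] at hq hmin
    refine sum_min_mul_le_of_mem_Icc (hpx.trans hq.2) (fun i hi => ?_) (hP p hpP) (hP q hq.1)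
      ⟨hpx, hq.2⟩
    rcases le_total (a i) x with h | h
    · exact Or.inl (hpmax _ (haP i hi) h)
    · exact Or.inr (hmin _ ⟨haP i hi, h⟩)
  · push Not at habove
    have hall : ∀ i ∈ s, a i ≤ p := fun i hi => hpmax _ (haP i hi) (habove _ (haP i hi)).le
    calc ∑ i ∈ s, min (a i) x * w i = ∑ i ∈ s, min (a i) p * w i := by
          refine sum_congr rfl fun i hi => ?_
          rw [min_eq_left (hall i hi), min_eq_left ((hall i hi).trans hpx)]
      _ ≤ p * R0 + S := hP p hpP
      _ ≤ x * R0 + S := by gcongr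

end PiecewiseLinear

section CoveringLP

variable {L : ℕ} (lam : Fin L → ℝ)

def feasibleValues (α : ℕ) : Set ℝ :=
  { x : ℝ | ∃ c : Finset (Fin L) → ℝ,
    (∀ U ∈ OmegaL L α, 0 ≤ c U) ∧
    (∀ l : Fin L, ∑ U ∈ (OmegaL L α).filter (fun U => l ∈ U), c U ≤ lam l) ∧
    x = ∑ U ∈ OmegaL L α, c U }

variable {lam}

lemma zero_mem_feasibleValues (hlam : ∀ l, 0 ≤ lam l) (α : ℕ) : (0 : ℝ) ∈ feasibleValues lam α :=
  ⟨0, fun _ _ => le_rfl, fun l => by simpa using hlam l, by simp⟩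

lemma le_sum_of_mem_feasibleValues {α : ℕ} (hα : 1 ≤ α) {x : ℝ} (hx : x ∈ feasibleValues lam α) :
    x ≤ ∑ l, lam l := by
  obtain ⟨c, hc0, hcov, rfl⟩ := hx
  have hdouble : ∑ U ∈ OmegaL L α, ∑ _l ∈ U, c U =
      ∑ l, ∑ U ∈ (OmegaL L α).filter (fun U => l ∈ U), c U :=
    sum_comm' fun U l => by simp
  calc ∑ U ∈ OmegaL L α, c U ≤ ∑ U ∈ OmegaL L α, ∑ _l ∈ U, c U := by
        refine sum_le_sum fun U hU => ?_
        have hcard : U.card = α := (mem_powersetCard.mp hU).2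
        obtain ⟨l, hl⟩ := card_pos.mp (by omega : 0 < U.card)
        exact single_le_sum (f := fun _ => c U) (fun _ _ => hc0 U hU) hl
    _ = ∑ l, ∑ U ∈ (OmegaL L α).filter (fun U => l ∈ U), c U := hdouble
    _ ≤ ∑ l, lam l := sum_le_sum fun l _ => hcov l

lemma bddAbove_feasibleValues {α : ℕ} (hα : 1 ≤ α) : BddAbove (feasibleValues lam α) :=
  ⟨_, fun _ => le_sum_of_mem_feasibleValues hα⟩

lemma fLP_nonneg (hlam : ∀ l, 0 ≤ lam l) {α : ℕ} (hα : 1 ≤ α) : 0 ≤ fLP L lam α :=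
  le_csSup (bddAbove_feasibleValues hα) (zero_mem_feasibleValues hlam α)

lemma feasibleValues_subset {α β : ℕ} (hαβ : α ≤ β) :
    feasibleValues lam β ⊆ feasibleValues lam α := by
  classical
  choose shrink hshrink_sub hshrink_card using
    fun U : Finset (Fin L) => exists_subset_card_eq (min_le_right α U.card)
  have hmaps : ∀ U ∈ OmegaL L β, shrink U ∈ OmegaL L α := fun U hU => by
    rw [OmegaL, mem_powersetCard] at hU ⊢
    exact ⟨subset_univ _, by rw [hshrink_card, hU.2, min_eq_left hαβ]⟩
  rintro _ ⟨c, hc0, hcov, rfl⟩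
  refine ⟨fun V => ∑ U ∈ (OmegaL L β).filter (fun U => shrink U = V), c U,
    fun V _ => sum_nonneg fun U hU => hc0 U (mem_filter.mp hU).1, fun l => ?_,
    (sum_fiberwise_of_maps_to hmaps c).symm⟩
  rw [sum_fiberwise_eq_sum_filter]
  refine le_trans (sum_le_sum_of_subset_of_nonneg (fun U hU => ?_)
    (fun U hU _ => hc0 U (mem_filter.mp hU).1)) (hcov l)
  simp only [mem_filter] at hU ⊢
  exact ⟨hU.1, hshrink_sub U hU.2.2⟩

lemma fLP_antitoneOn (hlam : ∀ l, 0 ≤ lam l) : AntitoneOn (fLP L lam) (Set.Ici 1) :=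
  fun _ hα _ _ hαβ => csSup_le_csSup (bddAbove_feasibleValues hα)
    ⟨0, zero_mem_feasibleValues hlam _⟩ (feasibleValues_subset hαβ)

end CoveringLP

lemma sum_Icc_min_mul_eq_of_antitoneOn {F H : ℕ → ℝ} {L m : ℕ} (hF : AntitoneOn F (Set.Ici 1))
    (hm : m ∈ Icc 1 L) :
    ∑ α ∈ Icc 1 L, min (F α) (F m) * H α =
      F m * ∑ α ∈ Icc 1 m, H α + ∑ α ∈ Icc (m + 1) L, F α * H α := by
  obtain ⟨hm1, hmL⟩ := mem_Icc.mp hm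
  have hlow : (Icc 1 L).filter (· ≤ m) = Icc 1 m := by
    ext; simp only [mem_filter, mem_Icc]; omega
  have hhigh : (Icc 1 L).filter (¬ · ≤ m) = Icc (m + 1) L := by
    ext; simp only [mem_filter, mem_Icc]; omega
  rw [← sum_filter_add_sum_filter_not _ (· ≤ m), hlow, hhigh, mul_sum]
  congr 1
  · refine sum_congr rfl fun α hα => ?_
    obtain ⟨hα1, hαm⟩ := mem_Icc.mp hα
    rw [min_eq_right (hF hα1 hm1 hαm), mul_comm]
  · refine sum_congr rfl fun α hα => ?_
    obtain ⟨hα1, -⟩ := mem_Icc.mp hα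
    rw [min_eq_left (hF hm1 (by omega : 1 ≤ α) (by omega))]

theorem smdca_hyperplane_reduction_general
    {L : ℕ} (lam : Fin L → ℝ) (hlam : ∀ l, 0 ≤ lam l)
    (H : ℕ → ℝ)
    (R0 : ℝ) (hR0 : 0 ≤ R0) (R : Fin L → ℝ) (hR : ∀ l, 0 ≤ R l) :
    (∀ lam0 : ℝ, 0 ≤ lam0 →
        lam0 * R0 + ∑ l : Fin L, lam l * R l ≥
          ∑ α ∈ Finset.Icc 1 L, min (fLP L lam α) lam0 * H α) ↔
      (∀ m ∈ Finset.Icc 1 L,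
        fLP L lam m * R0 + ∑ l : Fin L, lam l * R l ≥
          fLP L lam m * ∑ α ∈ Finset.Icc 1 m, H α +
            ∑ α ∈ Finset.Icc (m + 1) L, fLP L lam α * H α) := by
  have hsplit := fun m (hm : m ∈ Icc 1 L) =>
    sum_Icc_min_mul_eq_of_antitoneOn (H := H) (fLP_antitoneOn hlam) hm
  constructor
  · intro h m hm
    rw [ge_iff_le, ← hsplit m hm]
    exact h _ (fLP_nonneg hlam (mem_Icc.mp hm).1)
  · intro h lam0 hlam0
    refine sum_min_mul_le_of_forall_le hR0
      (sum_nonneg fun l _ => mul_nonneg (hlam l) (hR l))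
      (fun m hm => fLP_nonneg hlam (mem_Icc.mp hm).1) (fun m hm => ?_) hlam0
    rw [hsplit m hm]
    exact h m hm

/-- **Reduction of the supporting-hyperplane family for SMDC-A** (core of Proposition 2):
the family of inequalities over all `λ₀ ≥ 0` is equivalent to the finite subfamily obtained
at `λ₀ = f_m(λ)`, `m = 1, …, L`. -/
theorem smdca_hyperplane_reduction
    {L : ℕ} (hL : 1 ≤ L) (lam : Fin L → ℝ) (hlam : ∀ l, 0 ≤ lam l)
    (H : ℕ → ℝ) (hH : ∀ α ∈ Finset.Icc 1 L, 0 ≤ H α)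
    (R0 : ℝ) (hR0 : 0 ≤ R0) (R : Fin L → ℝ) (hR : ∀ l, 0 ≤ R l) :
    (∀ lam0 : ℝ, 0 ≤ lam0 →
        lam0 * R0 + ∑ l : Fin L, lam l * R l ≥
          ∑ α ∈ Finset.Icc 1 L, min (fLP L lam α) lam0 * H α) ↔
      (∀ m ∈ Finset.Icc 1 L,
        fLP L lam m * R0 + ∑ l : Fin L, lam l * R l ≥
          fLP L lam m * ∑ α ∈ Finset.Icc 1 m, H α +
            ∑ α ∈ Finset.Icc (m + 1) L, fLP L lam α * H α) :=
  smdca_hyperplane_reduction_general lam hlam H R0 hR0 R hR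
end
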